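/- arXiv:0711.1536 — 11 statements merged into one kernel-verified Lean document; each statement's English description precedes it below -/
import Mathlib

section
/- Let G be a group and N a normal subgroup of G, with quotient map π : G → Q = G/N. Conjugation in G induces a well-defined action of Q on the center Z(N) (this is well defined because N acts trivially on Z(N) by conjugation). Then the group of automorphisms of G that restrict to the identity on N and induce the identity on Q is isomorphic to the group Z¹(Q, Z(N)) of crossed homomorphisms, i.e. functions f : Q → Z(N) satisfying f(qq') = f(q)·(q • f(q')), with the isomorphism μ given by μ(f)(g) = f(π(g))·g for g ∈ G. (Kernel part of the Wells–Buckley exact sequence, Theorem 2.1.) -/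
/-!
An automorphism `φ` fixing `N` and inducing the identity on `G ⧸ N` is recorded by
`g ↦ φ g * g⁻¹`, which lies in `N` and is constant on cosets of `N` (as `φ` fixes `N`), so it
descends to `f : G ⧸ N → N`. Multiplicativity of `φ` is exactly the cocycle identity for `f`,
and comparing `φ (g⁻¹ n g) = g⁻¹ n g` with `(φ g)⁻¹ n (φ g)` shows that `f` is central in `N`.
Conversely `g ↦ f g * g` is an automorphism for every `N`-valued cocycle, and composition of
automorphisms matches pointwise multiplication of cocycles because `f (f' g * g) = f g`.
-/

section

variable {G : Type*} [Group G] {N : Subgroup G}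

/-- The crossed-homomorphism identity `f(q q') = f(q) · (q • f(q'))`, with `Q = G ⧸ N` acting
through conjugation by lifts. -/
def IsConjCocycle (f : G ⧸ N → G) : Prop :=
  ∀ g g' : G, f (g * g' : G) = f g * (g * f g' * g⁻¹)

lemma IsConjCocycle.apply_one {f : G ⧸ N → G} (hf : IsConjCocycle f) :
    f ((1 : G) : G ⧸ N) = 1 := by
  simpa using hf 1 1

section cocycleOfAut

variable {φ : MulAut G} (hφN : ∀ n ∈ N, φ n = n)

def cocycleOfAut : G ⧸ N → G :=
  fun q => q.liftOn' (fun g => φ g * g⁻¹) fun a b hab => by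
    obtain ⟨m, hm, rfl⟩ : ∃ m ∈ N, b = a * m :=
      ⟨a⁻¹ * b, QuotientGroup.leftRel_apply.mp hab, (mul_inv_cancel_left a b).symm⟩
    rw [map_mul, hφN m hm]
    group

lemma cocycleOfAut_mk (g : G) : cocycleOfAut hφN g = φ g * g⁻¹ := rfl

lemma isConjCocycle_cocycleOfAut : IsConjCocycle (cocycleOfAut hφN) := by
  intro g g'
  simp only [cocycleOfAut_mk, map_mul]
  group

variable [N.Normal]

lemma cocycleOfAut_mem (hφQ : ∀ g : G, ((φ g : G) : G ⧸ N) = g) (q : G ⧸ N) :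
    cocycleOfAut hφN q ∈ N := by
  induction q using QuotientGroup.induction_on with
  | H g =>
    rw [cocycleOfAut_mk, ← QuotientGroup.eq_one_iff, QuotientGroup.mk_mul, QuotientGroup.mk_inv,
      hφQ, mul_inv_cancel]

lemma cocycleOfAut_commute (q : G ⧸ N) {n : G} (hn : n ∈ N) :
    cocycleOfAut hφN q * n = n * cocycleOfAut hφN q := by
  induction q using QuotientGroup.induction_on with
  | H g =>
    have hconj : (φ g)⁻¹ * n * φ g = g⁻¹ * n * g := by
      simpa only [map_mul, map_inv, hφN n hn] using
        hφN _ (Subgroup.Normal.conj_mem' ‹_› n hn g)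
    calc φ g * g⁻¹ * n = φ g * (g⁻¹ * n * g) * g⁻¹ := by group
      _ = φ g * ((φ g)⁻¹ * n * φ g) * g⁻¹ := by rw [hconj]
      _ = n * (φ g * g⁻¹) := by group

end cocycleOfAut

variable [N.Normal]

lemma QuotientGroup.mk_mul_of_mem_left {n : G} (hn : n ∈ N) (g : G) :
    ((n * g : G) : G ⧸ N) = g := by
  rw [QuotientGroup.mk_mul, (QuotientGroup.eq_one_iff n).mpr hn, one_mul]

def autOfCocycle (f : G ⧸ N → G) (hN : ∀ q, f q ∈ N) (hf : IsConjCocycle f) : MulAut G where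
  toFun g := f g * g
  invFun g := (f g)⁻¹ * g
  left_inv g := by
    simp only [QuotientGroup.mk_mul_of_mem_left (hN _), inv_mul_cancel_left]
  right_inv g := by
    simp only [QuotientGroup.mk_mul_of_mem_left (inv_mem (hN _)), mul_inv_cancel_left]
  map_mul' g g' := by
    simp only [hf g g']
    group

variable {f f' : G ⧸ N → G}

lemma autOfCocycle_apply {hN : ∀ q, f q ∈ N} {hf : IsConjCocycle f} (g : G) :
    autOfCocycle f hN hf g = f g * g :=
  rfl

lemma autOfCocycle_apply_of_mem {hN : ∀ q, f q ∈ N} {hf : IsConjCocycle f} {n : G} (hn : n ∈ N) :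
    autOfCocycle f hN hf n = n := by
  rw [autOfCocycle_apply, (QuotientGroup.eq_one_iff n).mpr hn, ← QuotientGroup.mk_one,
    hf.apply_one, one_mul]

lemma mk_autOfCocycle {hN : ∀ q, f q ∈ N} {hf : IsConjCocycle f} (g : G) :
    ((autOfCocycle f hN hf g : G) : G ⧸ N) = g :=
  QuotientGroup.mk_mul_of_mem_left (hN _) g

lemma autOfCocycle_mul (hN : ∀ q, f q ∈ N) (hf : IsConjCocycle f) (hN' : ∀ q, f' q ∈ N)
    (hf' : IsConjCocycle f')
    (hN'' : ∀ q, (f * f') q ∈ N) (hf'' : IsConjCocycle (f * f')) :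
    autOfCocycle (f * f') hN'' hf'' = autOfCocycle f hN hf * autOfCocycle f' hN' hf' := by
  ext g
  rw [MulAut.mul_apply, autOfCocycle_apply (g := autOfCocycle f' hN' hf' g), mk_autOfCocycle]
  simp only [autOfCocycle_apply, Pi.mul_apply, mul_assoc]

lemma eq_of_autOfCocycle_eq (hN : ∀ q, f q ∈ N) (hf : IsConjCocycle f) (hN' : ∀ q, f' q ∈ N)
    (hf' : IsConjCocycle f')
    (h : autOfCocycle f hN hf = autOfCocycle f' hN' hf') : f = f' := by
  funext q
  induction q using QuotientGroup.induction_on with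
  | H g => exact mul_right_cancel (DFunLike.congr_fun h g)

lemma autOfCocycle_cocycleOfAut {φ : MulAut G} (hφN : ∀ n ∈ N, φ n = n)
    (hN : ∀ q, cocycleOfAut hφN q ∈ N) (hf : IsConjCocycle (cocycleOfAut hφN)) :
    autOfCocycle (cocycleOfAut hφN) hN hf = φ := by
  ext g
  rw [autOfCocycle_apply, cocycleOfAut_mk, inv_mul_cancel_right]

end

/-- **Kernel part of the Wells–Buckley exact sequence (Theorem 2.1).**
For a group `G` with normal subgroup `N` and quotient `Q = G ⧸ N`, the group `K` of
automorphisms of `G` restricting to the identity on `N` and inducing the identity on `Q`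
is isomorphic to the group `Z¹(Q, Z(N))` of crossed homomorphisms `f : Q → Z(N)`
(functions with values in the center of `N`, satisfying the cocycle condition
`f(qq') = f(q) · (q • f(q'))`, where `Q` acts on `Z(N)` by conjugation by lifts),
the isomorphism `μ` being given by `μ(f)(g) = f(π(g)) · g`.  Here the crossed
homomorphisms are realized as a subgroup `Z1` of the group of functions
`G ⧸ N → G` under pointwise multiplication. -/
theorem wells_buckley_kernel {G : Type*} [Group G] (N : Subgroup G) [N.Normal]
    (Z1 : Subgroup (G ⧸ N → G))
    (hZ1 : ∀ f : G ⧸ N → G, f ∈ Z1 ↔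
      (∀ q : G ⧸ N, f q ∈ N) ∧
      (∀ q : G ⧸ N, ∀ n ∈ N, f q * n = n * f q) ∧
      (∀ g g' : G, f ((g * g' : G) : G ⧸ N) = f (g : G ⧸ N) * (g * f (g' : G ⧸ N) * g⁻¹)))
    (K : Subgroup (MulAut G))
    (hK : ∀ φ : MulAut G, φ ∈ K ↔
      (∀ n ∈ N, φ n = n) ∧
      (∀ g : G, ((φ g : G) : G ⧸ N) = ((g : G) : G ⧸ N))) :
    ∃ e : Z1 ≃* K,
      ∀ (f : Z1) (g : G), (((e f : MulAut G)) g = (f : G ⧸ N → G) (g : G ⧸ N) * g) := by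
  have hN (f : Z1) := ((hZ1 f).1 f.2).1
  have hf (f : Z1) : IsConjCocycle (f : G ⧸ N → G) := ((hZ1 f).1 f.2).2.2
  let μ : Z1 →* K := MonoidHom.mk'
    (fun f => ⟨autOfCocycle f (hN f) (hf f),
      (hK _).2 ⟨fun _ => autOfCocycle_apply_of_mem, mk_autOfCocycle⟩⟩)
    fun f f' => Subtype.ext <|
      autOfCocycle_mul (hN f) (hf f) (hN f') (hf f') (hN (f * f')) (hf (f * f'))
  have hμ_inj : Function.Injective μ := fun f f' h =>
    Subtype.ext (eq_of_autOfCocycle_eq (hN f) (hf f) (hN f') (hf f') (congrArg Subtype.val h))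
  have hμ_surj : Function.Surjective μ := by
    rintro ⟨φ, hφ⟩
    obtain ⟨hφN, hφQ⟩ := (hK φ).1 hφ
    have hmem : cocycleOfAut hφN ∈ Z1 := (hZ1 _).2
      ⟨cocycleOfAut_mem hφN hφQ, fun q _ => cocycleOfAut_commute hφN q,
        isConjCocycle_cocycleOfAut hφN⟩
    let f : Z1 := ⟨cocycleOfAut hφN, hmem⟩
    exact ⟨f, Subtype.ext (autOfCocycle_cocycleOfAut hφN (hN f) (hf f))⟩
  exact ⟨MulEquiv.ofBijective μ ⟨hμ_inj, hμ_surj⟩, fun _ _ => rfl⟩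
end

section
/- Let p be a prime, G a finite group, and N a normal subgroup of G such that the center Z(N) is a p-group. Let ρ : Aut_N(G) → Aut(G/N) × Aut(N) be the natural homomorphism. Then the induced homomorphism of group algebras 𝔽_p[Aut_N(G)] → 𝔽_p[Im(ρ)] (induced by the corestriction of ρ onto its image) is surjective and its kernel is a nilpotent ideal. (Corollary 2.2.) -/
open Pointwise

/-!
An automorphism `φ` in the kernel of `ρ` acts trivially on `G ⧸ N` and on `N`, so
`z := g⁻¹ * φ g` lies in `Z(N)` and `φ ^ n` sends `g` to `g * z ^ n`: the kernel of `ρ` is a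
`p`-group. For `f : H →* Q` with kernel a `p`-group `K`, the kernel of `𝔽_p[H] → 𝔽_p[Q]` lies in
the left ideal generated by the augmentation ideal `I_K` of `𝔽_p[K]`; this left ideal is two-sided
because `K` is normal, so its `n`-th power lies in `𝔽_p[H] * I_K ^ n`. Finally `I_K` is nilpotent,
by induction on `|K|`: dividing out a central cyclic subgroup `⟨z⟩` puts a power of `I_K` into
`𝔽_p[K] * (1 - z)`, and `1 - z` is central with `(1 - z) ^ p ^ a = 1 - z ^ p ^ a = 0`.
-/

namespace Submodule

variable {R A : Type*} [CommSemiring R] [Semiring A] [Algebra R A]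

theorem list_prod_mem_pow {J : Submodule R A} {l : List A} (hl : ∀ x ∈ l, x ∈ J) :
    l.prod ∈ J ^ l.length := by
  induction l with
  | nil => exact one_le.mp le_rfl
  | cons a l ih =>
    rw [List.prod_cons, List.length_cons, pow_succ']
    exact mul_mem_mul (hl a List.mem_cons_self) (ih fun x hx => hl x (List.mem_cons_of_mem a hx))

theorem top_mul_pow_le {I : Submodule R A} (hI : I * ⊤ ≤ ⊤ * I) (n : ℕ) :
    (⊤ * I) ^ n ≤ ⊤ * I ^ n := by
  induction n with
  | zero => simp
  | succ n ih =>
    calc (⊤ * I) ^ (n + 1) = ⊤ * I * (⊤ * I) ^ n := pow_succ' _ _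
      _ ≤ ⊤ * I * (⊤ * I ^ n) := mul_le_mul_right ih _
      _ = ⊤ * (I * ⊤) * I ^ n := by simp only [mul_assoc]
      _ ≤ ⊤ * (⊤ * I) * I ^ n := by gcongr
      _ ≤ ⊤ * I ^ (n + 1) := by
        rw [← mul_assoc, mul_assoc, ← pow_succ']
        exact mul_le_mul_left le_top _

theorem span_singleton_mul_top_le {c : A} (hc : ∀ y, Commute c y) :
    span R {c} * ⊤ ≤ ⊤ * span R {c} := by
  rw [mul_le]
  rintro _ hx y -
  obtain ⟨r, rfl⟩ := mem_span_singleton.mp hx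
  rw [smul_mul_assoc, (hc y).eq, ← mul_smul_comm]
  exact mul_mem_mul mem_top (smul_mem _ r (mem_span_singleton_self c))

end Submodule

namespace MonoidAlgebra

theorem mapDomain_surjective {R M N : Type*} [Semiring R] {f : M → N} (hf : f.Surjective) :
    (mapDomain (R := R) f).Surjective := fun y => by
  obtain ⟨c, hc⟩ := Finsupp.mapDomain_surjective hf y.coeff
  exact ⟨ofCoeff c, by ext; simp [hc]⟩

section Augmentation

variable (R : Type*) [CommRing R] {H Q : Type*} [Group H] [Group Q]

/-- The image in `R[H]` of the augmentation ideal of `R[K]`; `⊤ * augmentationSubmodule R K` is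
the left ideal of `R[H]` that it generates. -/
noncomputable def augmentationSubmodule (K : Subgroup H) : Submodule R (MonoidAlgebra R H) :=
  Submodule.span R ((fun k => 1 - single k 1) '' K)

variable {R}

theorem one_sub_single_mem_augmentationSubmodule {K : Subgroup H} {k : H} (hk : k ∈ K) :
    1 - single k 1 ∈ augmentationSubmodule R K :=
  Submodule.subset_span ⟨k, hk, rfl⟩

theorem augmentationSubmodule_mono {K L : Subgroup H} (hKL : K ≤ L) :
    augmentationSubmodule R K ≤ augmentationSubmodule R L :=
  Submodule.span_mono (Set.image_mono hKL)

theorem augmentationSubmodule_bot : augmentationSubmodule R (⊥ : Subgroup H) = ⊥ := by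
  simp [augmentationSubmodule, one_def]

theorem map_augmentationSubmodule (f : H →* Q) (K : Subgroup H) :
    (augmentationSubmodule R K).map (mapDomainAlgHom R R f).toLinearMap =
      augmentationSubmodule R (K.map f) := by
  rw [augmentationSubmodule, Submodule.map_span, Set.image_image, augmentationSubmodule,
    Subgroup.coe_map, Set.image_image]
  exact congrArg _ (Set.image_congr fun k _ => by simp [map_sub])

theorem augmentationSubmodule_mul_top_le (K : Subgroup H) [K.Normal] :
    augmentationSubmodule R K * ⊤ ≤ ⊤ * augmentationSubmodule R K := by
  rw [Submodule.mul_le]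
  rintro x hx y -
  induction hx using Submodule.span_induction with
  | mem x hx =>
    obtain ⟨k, hk, rfl⟩ := hx
    induction y using induction_linear with
    | zero => simp
    | add y y' hy hy' => rw [mul_add]; exact add_mem hy hy'
    | single h r =>
      have hconj : (1 - single k 1) * single h r =
          single h r * (1 - single (h⁻¹ * k * h) 1) := by
        simp [sub_mul, mul_sub, single_mul_single, mul_assoc]
      rw [hconj]
      exact Submodule.mul_mem_mul Submodule.mem_top
        (one_sub_single_mem_augmentationSubmodule (‹K.Normal›.conj_mem' k hk h))
  | zero => simp
  | add x x' _ _ hx hx' => rw [add_mul]; exact add_mem hx hx'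
  | smul c x _ hx => rw [smul_mul_assoc]; exact Submodule.smul_mem _ c hx

theorem mem_top_mul_augmentationSubmodule_ker (f : H →* Q) {x : MonoidAlgebra R H}
    (hx : mapDomain f x = 0) : x ∈ ⊤ * augmentationSubmodule R f.ker := by
  set s := Function.invFun f
  have hsub : ∀ y : MonoidAlgebra R H,
      y - mapDomain (s ∘ f) y ∈ ⊤ * augmentationSubmodule R f.ker := by
    intro y
    induction y using induction_linear with
    | zero => simp
    | add y y' hy hy' => rw [mapDomain_add, add_sub_add_comm]; exact add_mem hy hy'
    | single h r =>
      have hfactor : single h r - single (s (f h)) r =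
          single h r * (1 - single (h⁻¹ * s (f h)) 1) := by
        simp [mul_sub, single_mul_single]
      rw [mapDomain_single, Function.comp_apply, hfactor]
      refine Submodule.mul_mem_mul Submodule.mem_top
        (one_sub_single_mem_augmentationSubmodule ?_)
      simp [s, Function.invFun_eq ⟨h, rfl⟩]
  have hsf : mapDomain (s ∘ f) x = 0 := by
    have hcomp : mapDomain (s ∘ f) x = mapDomain s (mapDomain f x) := by
      ext; simp [Finsupp.mapDomain_comp]
    rw [hcomp, hx, mapDomain_zero]
  simpa [hsf] using hsub x

theorem augmentationSubmodule_top_pow_le (f : H →* Q) {m : ℕ}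
    (hm : augmentationSubmodule R (⊤ : Subgroup Q) ^ m = ⊥) :
    augmentationSubmodule R (⊤ : Subgroup H) ^ m ≤ ⊤ * augmentationSubmodule R f.ker := by
  intro x hx
  apply mem_top_mul_augmentationSubmodule_ker
  have hfx := Submodule.mem_map_of_mem (f := (mapDomainAlgHom R R f).toLinearMap) hx
  rw [Submodule.map_pow, map_augmentationSubmodule] at hfx
  have := pow_le_pow_left' (augmentationSubmodule_mono (R := R) le_top) m hfx
  rwa [hm, Submodule.mem_bot] at this

end Augmentation

section PGroup

variable {p : ℕ} [Fact p.Prime] {K : Type*} [Group K]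

theorem top_mul_augmentationSubmodule_zpowers_pow_eq_bot [Finite K] {z : K}
    (hz : z ∈ Subgroup.center K) {a : ℕ} (ha : z ^ p ^ a = 1) :
    (⊤ * augmentationSubmodule (ZMod p) (Subgroup.zpowers z)) ^ p ^ a = ⊥ := by
  have := charP_of_injective_algebraMap' (ZMod p) (A := MonoidAlgebra (ZMod p) K) p
  set W : MonoidAlgebra (ZMod p) K := 1 - single z 1
  have hW : ∀ y, Commute W y := fun y => (Commute.one_left y).sub_left <|
    single_commute (fun k => (Subgroup.mem_center_iff.mp hz k).symm) (Commute.all 1) y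
  have haug : augmentationSubmodule (ZMod p) (Subgroup.zpowers z) ≤
      ⊤ * Submodule.span (ZMod p) {W} := by
    rw [augmentationSubmodule, Submodule.span_le]
    rintro _ ⟨k, hk, rfl⟩
    obtain ⟨n, rfl⟩ := mem_powers_iff_mem_zpowers.mpr hk
    have hsingle : single (z ^ n) (1 : ZMod p) = single z 1 ^ n := by rw [single_pow, one_pow]
    change 1 - single (z ^ n) 1 ∈ ⊤ * Submodule.span (ZMod p) {W}
    rw [hsingle, ← geom_sum_mul_neg]
    exact Submodule.mul_mem_mul Submodule.mem_top (Submodule.mem_span_singleton_self W)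
  have htop : ⊤ * augmentationSubmodule (ZMod p) (Subgroup.zpowers z) ≤
      ⊤ * Submodule.span (ZMod p) {W} :=
    calc _ ≤ ⊤ * (⊤ * Submodule.span (ZMod p) {W}) := mul_le_mul_right haug ⊤
      _ ≤ ⊤ * Submodule.span (ZMod p) {W} := by
        rw [← mul_assoc]
        exact mul_le_mul_left le_top _
  have hWpow : W ^ p ^ a = 0 := by
    rw [sub_pow_char_pow_of_commute p a (Commute.one_left _), one_pow, single_pow, ha, one_pow,
      ← one_def, sub_self]
  refine le_bot_iff.mp ?_
  calc (⊤ * augmentationSubmodule (ZMod p) (Subgroup.zpowers z)) ^ p ^ a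
      ≤ (⊤ * Submodule.span (ZMod p) {W}) ^ p ^ a := pow_le_pow_left' htop _
    _ ≤ ⊤ * Submodule.span (ZMod p) {W} ^ p ^ a :=
        Submodule.top_mul_pow_le (Submodule.span_singleton_mul_top_le hW) _
    _ ≤ ⊥ := by
      rw [Submodule.span_pow, Set.singleton_pow, hWpow, Submodule.span_zero_singleton,
        Submodule.mul_bot]

theorem exists_augmentationSubmodule_top_pow_eq_bot [Finite K] (hK : IsPGroup p K) :
    ∃ m, augmentationSubmodule (ZMod p) (⊤ : Subgroup K) ^ m = ⊥ := by
  induction h : Nat.card K using Nat.strong_induction_on generalizing K with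
  | _ n ih =>
  subst h
  rcases subsingleton_or_nontrivial K with _ | _
  · exact ⟨1, by rw [Subgroup.eq_bot_of_subsingleton ⊤, augmentationSubmodule_bot, pow_one]⟩
  have := hK.center_nontrivial
  obtain ⟨z, hz1⟩ := exists_ne (1 : Subgroup.center K)
  set C := Subgroup.zpowers (z : K)
  have hC : C.Normal := ⟨fun c hc g => by
    rwa [(Subgroup.mem_center_iff.mp (Subgroup.zpowers_le.mpr z.2 hc) g), mul_inv_cancel_right]⟩
  have hcard : Nat.card (K ⧸ C) < Nat.card K := by
    have : 1 < Nat.card C := (Subgroup.one_lt_card_iff_ne_bot C).mpr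
      (by simpa [C, Subgroup.zpowers_eq_bot] using hz1)
    rw [Subgroup.card_eq_card_quotient_mul_card_subgroup C]
    exact lt_mul_of_one_lt_right Nat.card_pos this
  obtain ⟨m, hm⟩ := ih _ hcard (hK.to_quotient C) rfl
  obtain ⟨a, ha⟩ := hK z
  refine ⟨m * p ^ a, ?_⟩
  rw [pow_mul, ← le_bot_iff, ← top_mul_augmentationSubmodule_zpowers_pow_eq_bot z.2 ha]
  gcongr
  simpa [QuotientGroup.ker_mk'] using augmentationSubmodule_top_pow_le (QuotientGroup.mk' C) hm

theorem exists_top_mul_augmentationSubmodule_pow_eq_bot (N : Subgroup K) [N.Normal] [Finite N]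
    (hN : IsPGroup p N) : ∃ m, (⊤ * augmentationSubmodule (ZMod p) N) ^ m = ⊥ := by
  obtain ⟨m, hm⟩ := exists_augmentationSubmodule_top_pow_eq_bot hN
  refine ⟨m, le_bot_iff.mp ?_⟩
  calc (⊤ * augmentationSubmodule (ZMod p) N) ^ m
      ≤ ⊤ * augmentationSubmodule (ZMod p) N ^ m :=
        Submodule.top_mul_pow_le (I := augmentationSubmodule (ZMod p) N)
          (augmentationSubmodule_mul_top_le N) m
    _ = ⊥ := by
      have hmap : augmentationSubmodule (ZMod p) N = (augmentationSubmodule (ZMod p) ⊤).map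
          (mapDomainAlgHom (ZMod p) (ZMod p) N.subtype).toLinearMap := by
        rw [map_augmentationSubmodule, ← MonoidHom.range_eq_map, Subgroup.range_subtype]
      rw [hmap, ← Submodule.map_pow, hm, Submodule.map_bot, Submodule.mul_bot]

end PGroup

end MonoidAlgebra

open MonoidAlgebra

namespace MulAut

variable {G : Type*} [Group G]

theorem pow_apply_eq_mul_pow {φ : MulAut G} {g z : G} (hg : φ g = g * z) (hz : φ z = z)
    (m : ℕ) : (φ ^ m) g = g * z ^ m := by
  induction m with
  | zero => simp
  | succ m ih => rw [pow_succ', mul_apply, ih, map_mul, map_pow, hg, hz, mul_assoc, ← pow_succ']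

variable {N : Subgroup G} [N.Normal] {φ : MulAut G}

theorem exists_mem_center_apply_eq_mul (hN : ∀ n ∈ N, φ n = n)
    (hQ : ∀ g : G, ((φ g : G) : G ⧸ N) = g) (g : G) :
    ∃ z : Subgroup.center N, φ g = g * z := by
  have hzN : g⁻¹ * φ g ∈ N := QuotientGroup.eq.mp (hQ g).symm
  refine ⟨⟨⟨g⁻¹ * φ g, hzN⟩, Subgroup.mem_center_iff.mpr fun n => Subtype.ext ?_⟩, by simp⟩
  have hconj := hN _ (‹N.Normal›.conj_mem n n.2 g)
  rw [map_mul, map_mul, map_inv, hN n n.2] at hconj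
  change (n : G) * (g⁻¹ * φ g) = g⁻¹ * φ g * n
  calc (n : G) * (g⁻¹ * φ g) = g⁻¹ * (g * n * g⁻¹) * φ g := by group
    _ = g⁻¹ * (φ g * n * (φ g)⁻¹) * φ g := by rw [hconj]
    _ = g⁻¹ * φ g * n := by group

theorem pow_card_center_eq_one (hN : ∀ n ∈ N, φ n = n)
    (hQ : ∀ g : G, ((φ g : G) : G ⧸ N) = g) : φ ^ Nat.card (Subgroup.center N) = 1 := by
  ext g
  obtain ⟨z, hz⟩ := exists_mem_center_apply_eq_mul hN hQ g
  rw [pow_apply_eq_mul_pow hz (hN _ z.1.2), one_apply]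
  simp [← SubmonoidClass.coe_pow, pow_card_eq_one']

end MulAut

theorem isPGroup_ker_of_isPGroup_center (p : ℕ) [Fact p.Prime] {G : Type*} [Group G] [Finite G]
    (N : Subgroup G) [N.Normal] (hZ : IsPGroup p (Subgroup.center N))
    (ρ : MulAction.stabilizer (MulAut G) N →* MulAut (G ⧸ N) × MulAut N)
    (hρ : ∀ φ : MulAction.stabilizer (MulAut G) N,
      (∀ g : G, (ρ φ).1 ((g : G ⧸ N)) = (((φ : MulAut G) g : G) : G ⧸ N)) ∧
      (∀ n : N, (((ρ φ).2 n : N) : G) = (φ : MulAut G) (n : G))) :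
    IsPGroup p ρ.ker := by
  obtain ⟨k, hk⟩ := IsPGroup.iff_card.mp hZ
  rintro ⟨φ, hφ⟩
  have hρφ : ρ φ = 1 := hφ
  have hN : ∀ n ∈ N, (φ : MulAut G) n = n := fun n hn => by
    simpa [hρφ] using ((hρ φ).2 ⟨n, hn⟩).symm
  have hQ : ∀ g : G, (((φ : MulAut G) g : G) : G ⧸ N) = g := fun g => by
    simpa [hρφ] using ((hρ φ).1 g).symm
  refine ⟨k, Subtype.ext (Subtype.ext ?_)⟩
  simpa [hk] using MulAut.pow_card_center_eq_one hN hQ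

/-- **Corollary 2.2.** Let `p` be a prime, `G` a finite group, and `N` a normal subgroup
of `G` whose center `Z(N)` is a `p`-group.  Let `ρ : Aut_N(G) → Aut(G/N) × Aut(N)` be the
natural homomorphism, where `Aut_N(G)` is the group of automorphisms of `G` mapping `N`
to itself (the stabilizer of `N` in `MulAut G`).  Then the induced map of group algebras
`𝔽_p[Aut_N(G)] → 𝔽_p[Im ρ]` (induced by the corestriction of `ρ` onto its range) is
surjective and its kernel is a nilpotent ideal (some power `n` of the kernel vanishes,
i.e. every product of `n` elements of the kernel is `0`). -/
theorem fp_aut_map_surjective_nilpotent_kernel (p : ℕ) [Fact p.Prime]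
    {G : Type*} [Group G] [Finite G] (N : Subgroup G) [N.Normal]
    (hZ : IsPGroup p (Subgroup.center ↥N))
    (ρ : ↥(MulAction.stabilizer (MulAut G) N) →* MulAut (G ⧸ N) × MulAut ↥N)
    (hρ : ∀ φ : ↥(MulAction.stabilizer (MulAut G) N),
      (∀ g : G, (ρ φ).1 ((g : G ⧸ N)) = (((φ : MulAut G) g : G) : G ⧸ N)) ∧
      (∀ n : ↥N, (((ρ φ).2 n : ↥N) : G) = (φ : MulAut G) (n : G))) :
    Function.Surjective (MonoidAlgebra.mapDomainRingHom (ZMod p) ρ.rangeRestrict) ∧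
    ∃ n : ℕ, ∀ l : List (MonoidAlgebra (ZMod p) ↥(MulAction.stabilizer (MulAut G) N)),
      (∀ x ∈ l, x ∈ RingHom.ker (MonoidAlgebra.mapDomainRingHom (ZMod p) ρ.rangeRestrict)) →
      l.length = n → l.prod = 0 := by
  refine ⟨mapDomain_surjective ρ.rangeRestrict_surjective, ?_⟩
  have hker : IsPGroup p ρ.rangeRestrict.ker := by
    rw [MonoidHom.ker_rangeRestrict]
    exact isPGroup_ker_of_isPGroup_center p N hZ ρ hρ
  obtain ⟨m, hm⟩ := exists_top_mul_augmentationSubmodule_pow_eq_bot _ hker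
  refine ⟨m, fun l hl hlen => ?_⟩
  have hprod := Submodule.list_prod_mem_pow fun x hx =>
    mem_top_mul_augmentationSubmodule_ker _ (RingHom.mem_ker.mp (hl x hx))
  rwa [hlen, hm, Submodule.mem_bot] at hprod
end

section
/- Let p be a prime, G a finite group, and N a normal subgroup of G such that the center Z(N) is a p-group. If Aut(G/N) and Aut(N) are both p-groups, then Aut_N(G), the group of automorphisms of G mapping N to itself, is a p-group. (Corollary 2.3.) -/
/-!
Restriction to `N` and the induced map on `G ⧸ N` give a homomorphism
`Aut_N(G) → Aut(N) × Aut(G ⧸ N)` into a `p`-group. An automorphism `σ` in its kernel fixes `N`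
pointwise and satisfies `g⁻¹ σ(g) ∈ N`; since `N` is normal, `g⁻¹ σ(g)` then also centralizes `N`.
So `σ ↦ (g ↦ g⁻¹ σ(g))` embeds the kernel into the `p`-group of functions `G → Z(N)`; it is
multiplicative because `σ` fixes the elements `g⁻¹ τ(g) ∈ N`.
-/

open Pointwise

namespace IsPGroup

variable {p : ℕ}

theorem prod {A B : Type*} [Group A] [Group B] (hA : IsPGroup p A) (hB : IsPGroup p B) :
    IsPGroup p (A × B) := by
  rintro ⟨a, b⟩
  obtain ⟨k, hk⟩ := hA a
  obtain ⟨l, hl⟩ := hB b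
  refine ⟨k + l, Prod.ext ?_ ?_⟩
  · rw [Prod.pow_fst, pow_add, pow_mul, hk, one_pow, Prod.fst_one]
  · rw [Prod.pow_snd, pow_add, pow_mul', hl, one_pow, Prod.snd_one]

theorem pi {ι : Type*} [Finite ι] {H : ι → Type*} [∀ i, Group (H i)]
    (h : ∀ i, IsPGroup p (H i)) : IsPGroup p (∀ i, H i) := by
  cases nonempty_fintype ι
  intro f
  choose k hk using fun i => h i (f i)
  refine ⟨∑ i, k i, funext fun i => ?_⟩
  rw [Pi.pow_apply, ← Nat.add_sub_cancel' (Finset.single_le_sum (fun j _ => (k j).zero_le)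
    (Finset.mem_univ i)), pow_add, pow_mul, hk, one_pow, Pi.one_apply]

theorem of_ker {G H : Type*} [Group G] [Group H] (hH : IsPGroup p H) (ϕ : G →* H)
    (hker : IsPGroup p ϕ.ker) : IsPGroup p G := by
  have h := (hH.to_subgroup ⊤).comap_of_ker_isPGroup ϕ hker
  rw [Subgroup.comap_top] at h
  exact h.of_equiv Subgroup.topEquiv

end IsPGroup

namespace MonoidHom

variable {G : Type*} [Group G] {N : Subgroup G} [N.Normal]

theorem inv_mul_apply_mem_centralizer {σ : G →* G} (hσ : ∀ n ∈ N, σ n = n) (g : G) :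
    g⁻¹ * σ g ∈ Subgroup.centralizer (N : Set G) := by
  intro n hn
  have hconj : σ g * n = g * n * g⁻¹ * σ g := by
    calc σ g * n = σ (g * n) := by rw [map_mul, hσ n hn]
      _ = σ (g * n * g⁻¹ * g) := by group
      _ = g * n * g⁻¹ * σ g := by rw [map_mul, hσ _ (‹N.Normal›.conj_mem n hn g)]
  calc n * (g⁻¹ * σ g) = g⁻¹ * (g * n * g⁻¹ * σ g) := by group
    _ = g⁻¹ * σ g * n := by rw [← hconj, mul_assoc]

end MonoidHom

namespace MulAut

variable {G : Type*} [Group G] (N : Subgroup G)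

theorem map_eq_of_mem_stabilizer {σ : MulAut G} (hσ : σ ∈ MulAction.stabilizer (MulAut G) N) :
    N.map (σ : G →* G) = N :=
  hσ

def restrictStabilizer : MulAction.stabilizer (MulAut G) N →* MulAut N where
  toFun σ := ((σ : MulAut G).subgroupMap N).trans (MulEquiv.subgroupCongr
    (map_eq_of_mem_stabilizer N σ.2))
  map_one' := rfl
  map_mul' _ _ := rfl

variable [N.Normal]

def quotientStabilizer : MulAction.stabilizer (MulAut G) N →* MulAut (G ⧸ N) where
  toFun σ := QuotientGroup.congr N N (σ : MulAut G) (map_eq_of_mem_stabilizer N σ.2)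
  map_one' := by ext ⟨g⟩; rfl
  map_mul' _ _ := by ext ⟨g⟩; rfl

def stabilizerToProd :
    MulAction.stabilizer (MulAut G) N →* MulAut N × MulAut (G ⧸ N) :=
  (restrictStabilizer N).prod (quotientStabilizer N)

variable {N}

theorem apply_eq_of_mem_ker {σ : MulAction.stabilizer (MulAut G) N}
    (hσ : σ ∈ (stabilizerToProd N).ker) {n : G} (hn : n ∈ N) : (σ : MulAut G) n = n :=
  congrArg (fun τ : MulAut N => (τ ⟨n, hn⟩ : G)) (Prod.ext_iff.mp hσ).1

theorem inv_mul_apply_mem_of_mem_ker {σ : MulAction.stabilizer (MulAut G) N}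
    (hσ : σ ∈ (stabilizerToProd N).ker) (g : G) : g⁻¹ * (σ : MulAut G) g ∈ N := by
  have h := congrArg (fun τ : MulAut (G ⧸ N) => τ g) (Prod.ext_iff.mp hσ).2
  exact QuotientGroup.eq.mp h.symm

theorem inv_mul_apply_mem_center_of_mem_ker {σ : MulAction.stabilizer (MulAut G) N}
    (hσ : σ ∈ (stabilizerToProd N).ker) (g : G) :
    (⟨g⁻¹ * (σ : MulAut G) g, inv_mul_apply_mem_of_mem_ker hσ g⟩ : N) ∈ Subgroup.center N :=
  Subgroup.mem_center_iff.mpr fun m => Subtype.ext <|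
    MonoidHom.inv_mul_apply_mem_centralizer (σ := ((σ : MulAut G) : G →* G))
      (fun _ => apply_eq_of_mem_ker hσ) g m m.2

variable (N)

def displacementHom : (stabilizerToProd N).ker →* (G → Subgroup.center N) where
  toFun σ g := ⟨_, inv_mul_apply_mem_center_of_mem_ker σ.2 g⟩
  map_one' := by ext g; simp
  map_mul' σ τ := by
    ext g
    have hτ : (τ : MulAut G) g = g * (g⁻¹ * (τ : MulAut G) g) := by group
    show g⁻¹ * (σ : MulAut G) ((τ : MulAut G) g)
      = g⁻¹ * (σ : MulAut G) g * (g⁻¹ * (τ : MulAut G) g)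
    rw [hτ, map_mul, apply_eq_of_mem_ker σ.2 (inv_mul_apply_mem_of_mem_ker τ.2 g)]
    group

theorem displacementHom_injective : Function.Injective (displacementHom N) := by
  rw [← MonoidHom.ker_eq_bot_iff, eq_bot_iff]
  intro σ hσ
  have hfix (g : G) : (σ : MulAut G) g = g := by
    have h : g⁻¹ * (σ : MulAut G) g = 1 := congrArg (fun x : G → Subgroup.center N => (x g : G)) hσ
    rwa [inv_mul_eq_one, eq_comm] at h
  exact Subtype.ext (Subtype.ext (MulEquiv.ext hfix))

end MulAut

theorem autN_is_pGroup_general (p : ℕ)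
    {G : Type*} [Group G] [Finite G] (N : Subgroup G) [N.Normal]
    (hZ : IsPGroup p (Subgroup.center ↥N))
    (hQ : IsPGroup p (MulAut (G ⧸ N)))
    (hN : IsPGroup p (MulAut ↥N)) :
    IsPGroup p ↥(MulAction.stabilizer (MulAut G) N) := by
  have hker : IsPGroup p (MulAut.stabilizerToProd N).ker :=
    (IsPGroup.pi fun _ => hZ).of_injective _ (MulAut.displacementHom_injective N)
  exact (hN.prod hQ).of_ker (MulAut.stabilizerToProd N) hker

/-- **Corollary 2.3.** Let `p` be a prime, `G` a finite group, and `N` a normal subgroup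
of `G` such that the center `Z(N)` is a `p`-group.  If `Aut(G/N)` and `Aut(N)` are both
`p`-groups, then `Aut_N(G)`, the group of automorphisms of `G` mapping `N` to itself
(the stabilizer of `N` in `MulAut G` acting pointwise on subgroups), is a `p`-group. -/
theorem autN_is_pGroup (p : ℕ) [Fact p.Prime]
    {G : Type*} [Group G] [Finite G] (N : Subgroup G) [N.Normal]
    (hZ : IsPGroup p (Subgroup.center ↥N))
    (hQ : IsPGroup p (MulAut (G ⧸ N)))
    (hN : IsPGroup p (MulAut ↥N)) :
    IsPGroup p ↥(MulAction.stabilizer (MulAut G) N) :=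
  autN_is_pGroup_general p N hZ hQ hN
end

section
/- Let p be an odd prime and G a finite p-group. Let N = Ω₁(G) be the subgroup of G generated by the elements of G of order dividing p (i.e. by {g ∈ G | gᵖ = 1}). If Aut(N) is a p-group, then Aut(G) is a p-group. (Corollary 2.4.) -/
/-!
For `β ∈ Aut(G)` of order `p^k m` with `p ∤ m`, the automorphism `α = β^(p^k)` satisfies
`α^m = 1`, and its restriction to the characteristic subgroup `Ω₁(G)` is trivial because
`Aut(Ω₁(G))` is a `p`-group. It remains to show that such a `p'`-automorphism `α` of a `p`-group,
fixing every element of order `p`, is trivial. Inducting on `|G|`, `α` is trivial on every proper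
`α`-invariant subgroup: on `⟨G^p, G'⟩`, proper since `G/G'` is a nontrivial `p`-group, and on
`D = C_G(C_G(α))` when `D ≠ G`. As `α` fixes commutators, `g⁻¹ α(g) ∈ D` for all `g`. If `D = G`
then `C_G(α)` is central, so `c = ⁅α(g), g⁻¹⁆` is central and
`(g⁻¹ α(g))^p = c^(p choose 2) g^(-p) α(g)^p = 1`, using `c^p = ⁅α(g^p), g⁻¹⁆ = 1` and `p` odd.
Either way `α` fixes every `g⁻¹ α(g)`, and then `α^j(g) = g (g⁻¹ α(g))^j` forces `α = 1`.
-/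

open scoped commutatorElement

section CommutatorPow

variable {G : Type*} [Group G] {a b : G}

theorem mul_eq_commutatorElement_mul (a b : G) : a * b = ⁅a, b⁆ * (b * a) := by
  rw [commutatorElement_def]; group

theorem pow_mul_eq_commutatorElement_pow_mul (hca : Commute ⁅a, b⁆ a) (n : ℕ) :
    a ^ n * b = ⁅a, b⁆ ^ n * (b * a ^ n) := by
  induction n with
  | zero => simp
  | succ n ih =>
    calc a ^ (n + 1) * b = a * (a ^ n * b) := by rw [pow_succ', mul_assoc]
      _ = ⁅a, b⁆ ^ n * (a * b) * a ^ n := by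
          rw [ih, ← mul_assoc, ← (hca.pow_left n).eq, mul_assoc, mul_assoc, mul_assoc]
      _ = ⁅a, b⁆ ^ (n + 1) * (b * a ^ (n + 1)) := by
          rw [mul_eq_commutatorElement_mul a b, pow_succ, pow_succ']; simp only [mul_assoc]

theorem commutatorElement_pow_left_of_commute (hca : Commute ⁅a, b⁆ a) (n : ℕ) :
    ⁅a ^ n, b⁆ = ⁅a, b⁆ ^ n := by
  rw [commutatorElement_def, pow_mul_eq_commutatorElement_pow_mul hca]
  group

theorem mul_pow_eq_commutatorElement_pow_choose_mul (hca : Commute ⁅a, b⁆ a)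
    (hcb : Commute ⁅a, b⁆ b) (n : ℕ) :
    (b * a) ^ n = ⁅a, b⁆ ^ n.choose 2 * (b ^ n * a ^ n) := by
  induction n with
  | zero => simp
  | succ n ih =>
    calc (b * a) ^ (n + 1) = ⁅a, b⁆ ^ n.choose 2 * b ^ n * (a ^ n * b) * a := by
          rw [pow_succ, ih]; group
      _ = ⁅a, b⁆ ^ n.choose 2 * (b ^ n * ⁅a, b⁆ ^ n) * b * a ^ (n + 1) := by
          rw [pow_mul_eq_commutatorElement_pow_mul hca]; group
      _ = ⁅a, b⁆ ^ (n + 1).choose 2 * (b ^ (n + 1) * a ^ (n + 1)) := by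
          rw [← ((hcb.pow_pow n n).eq), Nat.choose_succ_succ, Nat.choose_one_right]; group

theorem inv_mul_pow_eq_one_of_pow_eq_pow {g : G} {n : ℕ} (hn : Odd n) (hpow : a ^ n = g ^ n)
    (hca : Commute ⁅a, g⁻¹⁆ a) (hcg : Commute ⁅a, g⁻¹⁆ g⁻¹) : (g⁻¹ * a) ^ n = 1 := by
  have hc : ⁅a, g⁻¹⁆ ^ n = 1 := by
    rw [← commutatorElement_pow_left_of_commute hca, hpow, commutatorElement_eq_one_iff_commute]
    exact ((Commute.refl g).pow_left n).inv_right
  obtain ⟨k, rfl⟩ := hn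
  have hchoose : (2 * k + 1).choose 2 = (2 * k + 1) * k := by
    rw [Nat.choose_two_right, Nat.add_sub_cancel, mul_left_comm, Nat.mul_div_cancel_left _ two_pos]
  rw [mul_pow_eq_commutatorElement_pow_choose_mul hca hcg, hchoose, pow_mul, hc, one_pow, hpow,
    inv_pow, inv_mul_cancel, mul_one]

end CommutatorPow

namespace MulAut

variable {G : Type*} [Group G] (α : MulAut G)

def restrict {H : Subgroup G} (hH : H.map α.toMonoidHom = H) : MulAut H :=
  (α.subgroupMap H).trans (MulEquiv.subgroupCongr hH)

variable {α}

@[simp]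
theorem coe_restrict_apply {H : Subgroup G} (hH : H.map α.toMonoidHom = H) (x : H) :
    (α.restrict hH x : G) = α x :=
  rfl

theorem coe_restrict_pow_apply {H : Subgroup G} (hH : H.map α.toMonoidHom = H) (n : ℕ) (x : H) :
    ((α.restrict hH ^ n) x : G) = (α ^ n) x := by
  induction n with
  | zero => rfl
  | succ n ih => rw [pow_succ', mul_apply, coe_restrict_apply, ih, pow_succ', mul_apply]

theorem restrict_pow_eq_one {H : Subgroup G} (hH : H.map α.toMonoidHom = H) {n : ℕ}
    (hα : α ^ n = 1) : α.restrict hH ^ n = 1 := by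
  ext x
  rw [coe_restrict_pow_apply, hα]
  rfl

theorem apply_eq_of_restrict_eq_one {H : Subgroup G} {hH : H.map α.toMonoidHom = H}
    (h : α.restrict hH = 1) {x : G} (hx : x ∈ H) : α x = x :=
  congrArg Subtype.val (DFunLike.congr_fun h ⟨x, hx⟩ :)

theorem map_eq_of_map_le [Finite G] {H : Subgroup G} (h : H.map α.toMonoidHom ≤ H) :
    H.map α.toMonoidHom = H :=
  Subgroup.eq_of_le_of_card_ge h (Subgroup.card_map_of_injective α.injective).ge

theorem map_closure_eq [Finite G] {s : Set G} (hs : ∀ x ∈ s, α x ∈ s) :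
    (Subgroup.closure s).map α.toMonoidHom = Subgroup.closure s :=
  map_eq_of_map_le <| by
    rw [MonoidHom.map_closure]
    exact Subgroup.closure_mono (by rintro _ ⟨x, hx, rfl⟩; exact hs x hx)

theorem map_centralizer_fixedPoints_le :
    (Subgroup.centralizer {x | α x = x}).map α.toMonoidHom ≤
      Subgroup.centralizer {x | α x = x} := by
  rintro _ ⟨x, hx, rfl⟩ c (hc : α c = c)
  change c * α x = α x * c
  rw [← hc, ← map_mul, ← map_mul, Subgroup.mem_centralizer_iff.mp hx c hc]

theorem inv_mul_apply_mem_centralizer_fixedPoints (hcomm : ∀ a b : G, α ⁅a, b⁆ = ⁅a, b⁆) (g : G) :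
    g⁻¹ * α g ∈ Subgroup.centralizer {x | α x = x} := by
  rintro c (hc : α c = c)
  have h : α g * c * (α g)⁻¹ = g * c * g⁻¹ := by
    have := hcomm g c
    rwa [map_commutatorElement, hc, commutatorElement_def, commutatorElement_def,
      mul_left_inj] at this
  calc c * (g⁻¹ * α g) = g⁻¹ * (g * c * g⁻¹) * α g := by group
    _ = g⁻¹ * α g * c := by rw [← h]; group

end MulAut

namespace IsPGroup

variable {p : ℕ} {G : Type*} [Group G]

theorem eq_one_of_pow_eq_one_of_coprime (hG : IsPGroup p G) {n : ℕ} (hn : p.Coprime n) {g : G}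
    (hg : g ^ n = 1) : g = 1 :=
  orderOf_eq_one_iff.mp ((hG.orderOf_coprime hn g).eq_one_of_dvd (orderOf_dvd_of_pow_eq_one hg))

theorem of_forall_eq_one_of_pow_eq_one_of_coprime [Finite G] (hp : p.Prime)
    (h : ∀ g : G, ∀ n : ℕ, p.Coprime n → g ^ n = 1 → g = 1) : IsPGroup p G := by
  intro g
  refine ⟨(orderOf g).factorization p, h _ _ (Nat.coprime_ordCompl hp (orderOf_pos g).ne') ?_⟩
  rw [← pow_mul, Nat.ordProj_mul_ordCompl_eq_self, pow_orderOf_eq_one]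

theorem subsingleton_of_pow_surjective [Finite G] (hG : IsPGroup p G)
    (hsurj : Function.Surjective (fun g : G => g ^ p)) : Subsingleton G := by
  have hinj : Function.Injective (fun g : G => g ^ p) := Finite.injective_iff_surjective.mpr hsurj
  have key : ∀ k : ℕ, ∀ g : G, g ^ p ^ k = 1 → g = 1 := by
    intro k
    induction k with
    | zero => simp
    | succ k ih =>
      intro g hg
      exact hinj ((ih (g ^ p) (by rwa [← pow_mul, ← pow_succ'])).trans (one_pow p).symm)
  refine subsingleton_of_forall_eq 1 fun g => ?_
  obtain ⟨k, hk⟩ := hG g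
  exact key k g hk

theorem closure_pow_union_commutatorSet_ne_top [Fact p.Prime] [Finite G] [Nontrivial G]
    (hG : IsPGroup p G) : Subgroup.closure (Set.range (· ^ p) ∪ commutatorSet G) ≠ ⊤ := by
  intro htop
  have : Group.IsNilpotent G := hG.isNilpotent
  have hsurj : Function.Surjective (fun q : Abelianization G => q ^ p) := by
    have hle : Subgroup.closure (Set.range (· ^ p) ∪ commutatorSet G) ≤
        (powMonoidHom p : Abelianization G →* _).range.comap Abelianization.of := by
      rw [Subgroup.closure_le]
      rintro _ (⟨x, rfl⟩ | ⟨a, b, rfl⟩)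
      · exact ⟨Abelianization.of x, by simp⟩
      · rw [SetLike.mem_coe, Subgroup.mem_comap, map_commutatorElement,
          commutatorElement_eq_one_iff_mul_comm.mpr (mul_comm _ _)]
        exact one_mem _
    rintro ⟨x⟩
    exact hle (htop ▸ Subgroup.mem_top x)
  have := (hG.of_surjective Abelianization.of QuotientGroup.mk_surjective)
    |>.subsingleton_of_pow_surjective hsurj
  refine (Group.IsSolvable.commutator_lt_top_of_nontrivial G).ne ?_
  rw [← Abelianization.ker_of, MonoidHom.ker_eq_top_iff]
  ext x
  exact Subsingleton.elim _ _

theorem mulAut_eq_one_of_inv_mul_apply_fixed (hG : IsPGroup p G) {α : MulAut G} {n : ℕ}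
    (hn : p.Coprime n) (hα : α ^ n = 1) (hfix : ∀ g : G, α (g⁻¹ * α g) = g⁻¹ * α g) : α = 1 := by
  ext g
  have hpow : ∀ m : ℕ, (α ^ m) g = g * (g⁻¹ * α g) ^ m := by
    intro m
    induction m with
    | zero => simp
    | succ m ih =>
      rw [pow_succ', MulAut.mul_apply, ih, map_mul, map_pow, hfix, pow_succ', ← mul_assoc,
        mul_inv_cancel_left]
  have hs : (g⁻¹ * α g) ^ n = 1 := by
    simpa [hα] using (hpow n).symm
  exact inv_mul_eq_one.mp (hG.eq_one_of_pow_eq_one_of_coprime hn hs) |>.symm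

theorem mulAut_eq_one_of_fixes_pow_eq_one [Fact p.Prime] (hp : Odd p) [Finite G]
    (hG : IsPGroup p G) {α : MulAut G} {n : ℕ} (hn : p.Coprime n) (hα : α ^ n = 1)
    (hfix : ∀ g : G, g ^ p = 1 → α g = g) : α = 1 := by
  induction hcard : Nat.card G using Nat.strong_induction_on generalizing G with
  | _ m ih =>
  subst hcard
  have fixes_proper_invariant :
      ∀ H : Subgroup G, H ≠ ⊤ → H.map α.toMonoidHom = H → ∀ x ∈ H, α x = x := by
    intro H hne hH x hx
    refine MulAut.apply_eq_of_restrict_eq_one (ih _ ?_ (hG.to_subgroup H)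
      (MulAut.restrict_pow_eq_one hH hα) (fun y hy => Subtype.ext (hfix y ?_)) rfl) hx
    · exact H.card_le_card_group.lt_of_ne fun h => hne (H.eq_top_of_card_eq h)
    · simpa using congrArg Subtype.val hy
  rcases subsingleton_or_nontrivial G with _ | _
  · ext x
    exact Subsingleton.elim _ _
  have hK := fixes_proper_invariant _ hG.closure_pow_union_commutatorSet_ne_top <|
    MulAut.map_closure_eq <| by
      rintro _ (⟨y, rfl⟩ | ⟨a, b, rfl⟩)
      · exact Or.inl ⟨α y, (map_pow α y p).symm⟩
      · exact Or.inr ⟨α a, α b, (map_commutatorElement α a b).symm⟩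
  have hcomm : ∀ a b : G, α ⁅a, b⁆ = ⁅a, b⁆ := fun a b =>
    hK _ (Subgroup.subset_closure (Or.inr ⟨a, b, rfl⟩))
  have hpow : ∀ y : G, α (y ^ p) = y ^ p := fun y =>
    hK _ (Subgroup.subset_closure (Or.inl ⟨y, rfl⟩))
  refine hG.mulAut_eq_one_of_inv_mul_apply_fixed hn hα fun g => ?_
  by_cases hD : Subgroup.centralizer {x | α x = x} = ⊤
  · have hcentral : ∀ z : G, Commute ⁅α g, g⁻¹⁆ z := fun z =>
      Subgroup.mem_centralizer_iff.mp ((Subgroup.eq_top_iff' _).mp hD z) _ (hcomm _ _)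
    exact hfix _ <| inv_mul_pow_eq_one_of_pow_eq_pow hp (by rw [← map_pow, hpow])
      (hcentral _) (hcentral _)
  · exact fixes_proper_invariant _ hD
      (MulAut.map_eq_of_map_le MulAut.map_centralizer_fixedPoints_le) _
      (MulAut.inv_mul_apply_mem_centralizer_fixedPoints hcomm g)

end IsPGroup

/-- **Corollary 2.4.** Let `p` be an odd prime and `G` a finite `p`-group.  Let
`N = Ω₁(G)` be the subgroup of `G` generated by the elements of order dividing `p`.
If `Aut(N)` is a `p`-group, then `Aut(G)` is a `p`-group. -/
theorem aut_is_pGroup_of_aut_omega1_is_pGroup (p : ℕ) [Fact p.Prime] (hodd : Odd p)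
    {G : Type*} [Group G] [Finite G] (hG : IsPGroup p G)
    (hN : IsPGroup p (MulAut ↥(Subgroup.closure {g : G | g ^ p = 1}))) :
    IsPGroup p (MulAut G) := by
  refine .of_forall_eq_one_of_pow_eq_one_of_coprime Fact.out fun β n hn hβ => ?_
  have hΩ : (Subgroup.closure {g : G | g ^ p = 1}).map β.toMonoidHom = _ :=
    MulAut.map_closure_eq fun g (hg : g ^ p = 1) => by
      show β g ^ p = 1
      rw [← map_pow, hg, map_one]
  have hβΩ := hN.eq_one_of_pow_eq_one_of_coprime hn (MulAut.restrict_pow_eq_one hΩ hβ)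
  exact hG.mulAut_eq_one_of_fixes_pow_eq_one hodd hn hβ fun g hg =>
    MulAut.apply_eq_of_restrict_eq_one hβΩ (Subgroup.subset_closure hg)
end

section
/- Let A and B be groups with a left A-action and a right B-action on a set X such that a(xb) = (ax)b for all a ∈ A, x ∈ X, b ∈ B, so that A × B acts on X by (a,b)·x = a x b⁻¹. Fix x ∈ X. Then A_x × B_x is a normal subgroup of the isotropy group (A×B)_x, and the map φ(a,b) = a·x = x·b⁻¹ induces a bijection from the quotient group (A×B)_x/(A_x × B_x) onto the intersection of orbits Ω(x) = (Ax) ∩ (xB); moreover φ carries the group multiplication to the product on Ω(x), i.e. if (a,b), (a',b') ∈ (A×B)_x then φ((a,b)(a',b')) = (aa')·x. (Proposition 3.1.) -/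
/-- **Proposition 3.1.** Let `A`, `B` be groups acting on a set `X` on the left and right
respectively, with commuting actions (the right `B`-action is encoded as a left
`Bᵐᵒᵖ`-action, `x·b = op b • x`).  Let `S = (A×B)ₓ` be the isotropy group of `x` for the
action `(a,b)·x = a x b⁻¹` (so `(a,b) ∈ S ↔ a • x = op b • x`), and let
`T = Aₓ × Bₓ`.  Then `T` is contained in `S`, `T` is normal in `S`, and the map
`φ(a,b) = a • x` induces a bijection from the quotient `S ⧸ T` onto the intersection of
orbits `Ω(x) = (Ax) ∩ (xB)`; moreover `φ` carries the product to the product on `Ω(x)`,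
since `φ(⟦s⟧) = s.1 • x` for all `s ∈ S` (hence `φ(⟦s s'⟧) = (s.1 s'.1) • x`). -/
theorem intersection_orbit_group_iso {A B X : Type*} [Group A] [Group B]
    [MulAction A X] [MulAction Bᵐᵒᵖ X] [SMulCommClass A Bᵐᵒᵖ X] (x : X)
    (S T : Subgroup (A × B))
    (hS : ∀ ab : A × B, ab ∈ S ↔ ab.1 • x = MulOpposite.op ab.2 • x)
    (hT : ∀ ab : A × B, ab ∈ T ↔ ab.1 • x = x ∧ MulOpposite.op ab.2 • x = x) :
    T ≤ S ∧ (T.subgroupOf S).Normal ∧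
    ∃ e : ↥S ⧸ T.subgroupOf S ≃ ↥(MulAction.orbit A x ∩ MulAction.orbit Bᵐᵒᵖ x),
      ∀ s : ↥S, ((e (QuotientGroup.mk s) : X) = ((s : A × B).1 • x)) := by
  have hTS : T ≤ S := by
    intro ab hab
    rw [hT] at hab
    rw [hS, hab.1, hab.2]
  refine ⟨hTS, ?_, ?_⟩
  · constructor
    intro n hn g
    rw [Subgroup.mem_subgroupOf] at hn ⊢
    have hg := (hS g).mp g.2
    have hn1 : (n : A × B).1 • x = x := ((hT n).mp hn).1
    have h1 : ((g * n * g⁻¹ : S) : A × B).1 • x = x := by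
      have hg2 : MulOpposite.op (g : A × B).2 • ((g : A × B).1⁻¹ • x) = x := by
        rw [← smul_comm ((g : A × B).1⁻¹) (MulOpposite.op (g : A × B).2) x, ← hg,
          inv_smul_smul]
      have hginv : (g : A × B).1⁻¹ • x = (MulOpposite.op (g : A × B).2)⁻¹ • x :=
        eq_inv_smul_iff.mpr hg2
      show ((g : A × B).1 * (n : A × B).1 * (g : A × B).1⁻¹) • x = x
      calc ((g : A × B).1 * (n : A × B).1 * (g : A × B).1⁻¹) • x
          = (g : A × B).1 • (n : A × B).1 • ((g : A × B).1⁻¹ • x) := by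
            rw [mul_smul, mul_smul]
        _ = (g : A × B).1 • (n : A × B).1 • ((MulOpposite.op (g : A × B).2)⁻¹ • x) := by
            rw [hginv]
        _ = (g : A × B).1 • (MulOpposite.op (g : A × B).2)⁻¹ • ((n : A × B).1 • x) :=
            congrArg _ (smul_comm _ _ _)
        _ = (g : A × B).1 • (MulOpposite.op (g : A × B).2)⁻¹ • x := by rw [hn1]
        _ = (MulOpposite.op (g : A × B).2)⁻¹ • ((g : A × B).1 • x) := smul_comm _ _ _
        _ = x := by rw [hg, inv_smul_smul]
    have h2 : MulOpposite.op ((g * n * g⁻¹ : S) : A × B).2 • x = x := by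
      rw [← (hS _).mp (g * n * g⁻¹).2, h1]
    exact (hT _).mpr ⟨h1, h2⟩
  · set Ω := MulAction.orbit A x ∩ MulAction.orbit Bᵐᵒᵖ x with hΩ
    have hmem : ∀ s : ↥S, (s : A × B).1 • x ∈ Ω := by
      intro s
      refine ⟨⟨(s : A × B).1, rfl⟩, ?_⟩
      rw [(hS _).mp s.2]
      exact ⟨MulOpposite.op (s : A × B).2, rfl⟩
    let f : ↥S → ↥Ω := fun s => ⟨(s : A × B).1 • x, hmem s⟩
    have hresp : ∀ s s' : ↥S, (QuotientGroup.leftRel (T.subgroupOf S)) s s' → f s = f s' := by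
      intro s s' h
      have h2 := QuotientGroup.leftRel_apply.mp h
      have h3 := ((hT _).mp ((Subgroup.mem_subgroupOf).mp h2)).1
      have h4 : ((s : A × B).1⁻¹ * (s' : A × B).1) • x = x := h3
      rw [mul_smul, inv_smul_eq_iff] at h4
      exact Subtype.ext h4.symm
    let F : ↥S ⧸ T.subgroupOf S → ↥Ω := Quotient.lift f hresp
    have hbij : Function.Bijective F := by
      constructor
      · intro q q'
        induction q using Quotient.inductionOn
        induction q' using Quotient.inductionOn
        rename_i s s'
        intro h
        have h' : (s : A × B).1 • x = (s' : A × B).1 • x := congrArg Subtype.val h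
        apply Quotient.sound
        apply QuotientGroup.leftRel_apply.mpr
        rw [Subgroup.mem_subgroupOf, hT]
        constructor
        · show ((s : A × B).1⁻¹ * (s' : A × B).1) • x = x
          rw [mul_smul, inv_smul_eq_iff, h']
        · rw [← (hS _).mp (s⁻¹ * s').2]
          show ((s : A × B).1⁻¹ * (s' : A × B).1) • x = x
          rw [mul_smul, inv_smul_eq_iff, h']
      · rintro ⟨y, ⟨a, rfl⟩, b, hb⟩
        have hs : (a, MulOpposite.unop b) ∈ S := by
          rw [hS]
          simpa using hb.symm
        exact ⟨Quotient.mk'' ⟨_, hs⟩, rfl⟩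
    exact ⟨Equiv.ofBijective F hbij, fun s => rfl⟩
end

section
/- Let A and B be finite groups with a left A-action and a right B-action on a set X such that a(xb) = (ax)b, and fix x ∈ X. Then the cardinality of the intersection of orbits Ω(x) = (Ax) ∩ (xB) divides the index of A_x in its normalizer N_A(A_x), i.e. |Ω(x)| divides |N_A(A_x)/A_x|, and likewise |Ω(x)| divides |N_B(B_x)/B_x|. (Corollary 3.2, first part.) -/
/-!
An element `a ∈ A` moves `x` inside its `B`-orbit exactly when it stabilizes the set `xB`, so
`Ω(x)` is the orbit of `x` under the setwise stabilizer `K` of `xB`, and `|Ω(x)| = [K : Aₓ]`.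
If `a • x = x • b` then `a Aₓ a⁻¹ = A_{a x} = A_{x b} = Aₓ`, so `Aₓ ≤ K ≤ N_A(Aₓ)` and the index
`[K : Aₓ]` divides `[N_A(Aₓ) : Aₓ]`.
-/

open Pointwise

namespace MulAction

variable {A B X : Type*} [Group A] [Group B] [MulAction A X] [MulAction B X]
  [SMulCommClass A B X]

lemma mem_stabilizer_orbit_iff {a : A} {x : X} :
    a ∈ stabilizer A (orbit B x) ↔ a • x ∈ orbit B x := by
  have smul_orbit : a • orbit B x = orbit B (a • x) := by
    simp only [orbit, Set.smul_set_range, smul_comm a]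
  rw [mem_stabilizer_iff, smul_orbit, orbit_eq_iff]

lemma stabilizer_le_stabilizer_orbit (x : X) :
    stabilizer A x ≤ stabilizer A (orbit B x) := fun a ha =>
  mem_stabilizer_orbit_iff.2 (by rw [mem_stabilizer_iff.1 ha]; exact mem_orbit_self x)

lemma stabilizer_orbit_le_normalizer (x : X) :
    stabilizer A (orbit B x) ≤ Subgroup.normalizer (stabilizer A x : Set A) := by
  intro a ha
  obtain ⟨b, hb⟩ := mem_stabilizer_orbit_iff.1 ha
  rw [Subgroup.mem_normalizer_iff_map_conj_eq, ← MulEquiv.toMonoidHom_eq_coe,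
    ← stabilizer_smul_eq_stabilizer_map_conj, ← hb, stabilizer_smul_eq_right]

lemma orbit_inter_orbit_eq_orbit_stabilizer (x : X) :
    orbit A x ∩ orbit B x = orbit (stabilizer A (orbit B x)) x := by
  ext y
  constructor
  · rintro ⟨⟨a, rfl⟩, hy⟩
    exact ⟨⟨a, mem_stabilizer_orbit_iff.2 hy⟩, rfl⟩
  · rintro ⟨⟨a, ha⟩, rfl⟩
    exact ⟨⟨a, rfl⟩, mem_stabilizer_orbit_iff.1 ha⟩

lemma card_orbit_inter_orbit_eq_relIndex (x : X) :
    Nat.card (orbit A x ∩ orbit B x : Set X) =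
      (stabilizer A x).relIndex (stabilizer A (orbit B x)) := by
  rw [orbit_inter_orbit_eq_orbit_stabilizer, Nat.card_coe_set_eq, ← index_stabilizer]
  rfl

lemma card_orbit_inter_orbit_dvd_relIndex_normalizer (x : X) :
    Nat.card (orbit A x ∩ orbit B x : Set X) ∣
      (stabilizer A x).relIndex (Subgroup.normalizer (stabilizer A x : Set A)) := by
  rw [card_orbit_inter_orbit_eq_relIndex, ← Subgroup.relIndex_mul_relIndex _ _ _
    (stabilizer_le_stabilizer_orbit (B := B) x) (stabilizer_orbit_le_normalizer x)]
  exact dvd_mul_right _ _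

end MulAction

theorem intersection_orbit_card_dvd_normalizer_general {A B X : Type*} [Group A] [Group B]
    [MulAction A X] [MulAction Bᵐᵒᵖ X] [SMulCommClass A Bᵐᵒᵖ X] (x : X) :
    Nat.card ↥(MulAction.orbit A x ∩ MulAction.orbit Bᵐᵒᵖ x) ∣
      Nat.card (↥(Subgroup.normalizer (MulAction.stabilizer A x : Set A)) ⧸
        (MulAction.stabilizer A x).subgroupOf (Subgroup.normalizer (MulAction.stabilizer A x : Set A))) ∧
    Nat.card ↥(MulAction.orbit A x ∩ MulAction.orbit Bᵐᵒᵖ x) ∣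
      Nat.card (↥(Subgroup.normalizer (MulAction.stabilizer Bᵐᵒᵖ x : Set Bᵐᵒᵖ)) ⧸
        (MulAction.stabilizer Bᵐᵒᵖ x).subgroupOf (Subgroup.normalizer (MulAction.stabilizer Bᵐᵒᵖ x : Set Bᵐᵒᵖ))) := by
  have := SMulCommClass.symm A Bᵐᵒᵖ X
  refine ⟨MulAction.card_orbit_inter_orbit_dvd_relIndex_normalizer x, ?_⟩
  rw [Set.inter_comm]
  exact MulAction.card_orbit_inter_orbit_dvd_relIndex_normalizer x

/-- **Corollary 3.2 (first part).** Let `A`, `B` be finite groups acting on a set `X` on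
the left and right respectively, with commuting actions (the right `B`-action encoded as
a left `Bᵐᵒᵖ`-action).  For `x ∈ X`, the cardinality of the intersection of orbits
`Ω(x) = (Ax) ∩ (xB)` divides `|N_A(Aₓ)/Aₓ|`, the index of the stabilizer `Aₓ` in its
normalizer, and likewise divides `|N_B(Bₓ)/Bₓ|`. -/
theorem intersection_orbit_card_dvd_normalizer {A B X : Type*} [Group A] [Group B]
    [Finite A] [Finite B]
    [MulAction A X] [MulAction Bᵐᵒᵖ X] [SMulCommClass A Bᵐᵒᵖ X] (x : X) :
    Nat.card ↥(MulAction.orbit A x ∩ MulAction.orbit Bᵐᵒᵖ x) ∣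
      Nat.card (↥(Subgroup.normalizer (MulAction.stabilizer A x : Set A)) ⧸
        (MulAction.stabilizer A x).subgroupOf (Subgroup.normalizer (MulAction.stabilizer A x : Set A))) ∧
    Nat.card ↥(MulAction.orbit A x ∩ MulAction.orbit Bᵐᵒᵖ x) ∣
      Nat.card (↥(Subgroup.normalizer (MulAction.stabilizer Bᵐᵒᵖ x : Set Bᵐᵒᵖ)) ⧸
        (MulAction.stabilizer Bᵐᵒᵖ x).subgroupOf (Subgroup.normalizer (MulAction.stabilizer Bᵐᵒᵖ x : Set Bᵐᵒᵖ))) :=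
  intersection_orbit_card_dvd_normalizer_general x
end

section
/- Let A and B be finite groups with a left A-action and a right B-action on a set X such that a(xb) = (ax)b, so that A × B acts on X by (a,b)·x = axb⁻¹. Then for every x ∈ X, the order of the isotropy subgroup (A×B)_x equals |A_x| · |B_x| · |(Ax) ∩ (xB)|. (Cardinality identity underlying Corollary 3.3: |Im(ρ)| = |Aut(Q)_{[E]}|·|Aut(N)_{[E]}|·|Ω([E])|.) -/
/-- **Cardinality identity underlying Corollary 3.3.** Let `A`, `B` be finite groups
acting on a set `X` on the left and right respectively, with commuting actions (the
right `B`-action encoded as a left `Bᵐᵒᵖ`-action), so that `A × B` acts on `X` by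
`(a,b)·x = a x b⁻¹`.  Let `S = (A×B)ₓ` be the isotropy group of `x` for this action
(so `(a,b) ∈ S ↔ a • x = op b • x`).  Then
`|S| = |Aₓ| · |Bₓ| · |(Ax) ∩ (xB)|`. -/
theorem card_isotropy_eq_card_stabilizers_mul_card_intersection_orbit
    {A B X : Type*} [Group A] [Group B] [Finite A] [Finite B]
    [MulAction A X] [MulAction Bᵐᵒᵖ X] [SMulCommClass A Bᵐᵒᵖ X] (x : X)
    (S : Subgroup (A × B))
    (hS : ∀ ab : A × B, ab ∈ S ↔ ab.1 • x = MulOpposite.op ab.2 • x) :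
    Nat.card ↥S =
      Nat.card ↥(MulAction.stabilizer A x) * Nat.card ↥(MulAction.stabilizer Bᵐᵒᵖ x) *
        Nat.card ↥(MulAction.orbit A x ∩ MulAction.orbit Bᵐᵒᵖ x) := by
  classical
  -- let S act on X via the A-component
  letI : SMul ↥S X := ⟨fun s y => (s : A × B).1 • y⟩
  have smul_def : ∀ (s : ↥S) (y : X), s • y = (s : A × B).1 • y := fun _ _ => rfl
  letI : MulAction ↥S X :=
    { one_smul := fun y => by rw [smul_def]; exact one_smul A y
      mul_smul := fun s t y => by
        rw [smul_def, smul_def, smul_def]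
        exact mul_smul _ _ y }
  -- the orbit of x under this action is the intersection of orbits
  have horb : MulAction.orbit ↥S x = MulAction.orbit A x ∩ MulAction.orbit Bᵐᵒᵖ x := by
    ext y
    constructor
    · rintro ⟨s, rfl⟩
      refine ⟨⟨(s : A × B).1, rfl⟩, ⟨MulOpposite.op (s : A × B).2, ?_⟩⟩
      exact ((hS _).mp s.2).symm
    · rintro ⟨⟨a, ha⟩, ⟨bop, hb⟩⟩
      refine ⟨⟨(a, bop.unop), (hS _).mpr ?_⟩, ha⟩
      simp only [MulOpposite.op_unop]
      exact ha.trans hb.symm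
  -- the stabilizer of x under this action is A_x × B_x
  have hstab : Nat.card ↥(MulAction.stabilizer ↥S x) =
      Nat.card ↥(MulAction.stabilizer A x) * Nat.card ↥(MulAction.stabilizer Bᵐᵒᵖ x) := by
    rw [← Nat.card_prod]
    refine Nat.card_congr ⟨fun s =>
      (⟨(s : A × B).1, s.2⟩, ⟨MulOpposite.op (s : A × B).2, ?_⟩),
      fun p => ⟨⟨(p.1.val, p.2.val.unop), (hS _).mpr ?_⟩, ?_⟩, fun s => ?_, fun p => ?_⟩
    · have h1 : (s : A × B).1 • x = MulOpposite.op (s : A × B).2 • x := (hS _).mp s.1.2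
      have h2 : (s : A × B).1 • x = x := s.2
      exact MulAction.mem_stabilizer_iff.mpr (h1 ▸ h2)
    · simp only [MulOpposite.op_unop]
      rw [p.1.2, p.2.2]
    · exact p.1.2
    · ext <;> simp
    · ext <;> simp
  -- orbit-stabilizer
  have key : Nat.card ↥S =
      Nat.card ↥(MulAction.orbit ↥S x) * Nat.card ↥(MulAction.stabilizer ↥S x) := by
    rw [Subgroup.card_eq_card_quotient_mul_card_subgroup (MulAction.stabilizer ↥S x)]
    congr 1
    exact Nat.card_congr (MulAction.orbitEquivQuotientStabilizer ↥S x).symm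
  rw [key, horb, hstab]
  ring
end

section
/- Let p be a prime, let A be a finite p-group and B a finite group, with a left A-action and a right B-action on a set X such that a(xb) = (ax)b. Then for every x ∈ X the cardinality of the intersection of orbits (Ax) ∩ (xB) is a power of p. -/
open MulAction Pointwise

/-- **(Section 3.)** Let `p` be a prime, `A` a finite `p`-group and `B` a finite group,
acting on a set `X` on the left and right respectively, with commuting actions (the
right `B`-action encoded as a left `Bᵐᵒᵖ`-action).  Then for every `x ∈ X` the
cardinality of the intersection of orbits `(Ax) ∩ (xB)` is a power of `p`. -/
theorem intersection_orbit_card_is_prime_pow (p : ℕ) [Fact p.Prime]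
    {A B X : Type*} [Group A] [Group B] [Finite A] [Finite B] (hA : IsPGroup p A)
    [MulAction A X] [MulAction Bᵐᵒᵖ X] [SMulCommClass A Bᵐᵒᵖ X] (x : X) :
    ∃ k : ℕ, Nat.card ↥(MulAction.orbit A x ∩ MulAction.orbit Bᵐᵒᵖ x) = p ^ k := by
  classical
  -- For any `a : A`, `a` maps the `B`-orbit of `x` to the `B`-orbit of `a • x`.
  have hsmul : ∀ a : A, a • orbit Bᵐᵒᵖ x = orbit Bᵐᵒᵖ (a • x) := by
    intro a
    ext y
    constructor
    · rintro ⟨z, ⟨b, rfl⟩, rfl⟩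
      exact ⟨b, (smul_comm a b x).symm⟩
    · rintro ⟨b, rfl⟩
      exact ⟨b • x, ⟨b, rfl⟩, smul_comm a b x⟩
  -- The stabilizer of the set `orbit Bᵐᵒᵖ x` inside `A`.
  set H : Subgroup A := MulAction.stabilizer A (orbit Bᵐᵒᵖ x) with hH
  -- The intersection of the two orbits is the `H`-orbit of `x`.
  have key : orbit A x ∩ orbit Bᵐᵒᵖ x = orbit H x := by
    ext y
    constructor
    · rintro ⟨⟨a, rfl⟩, hy⟩
      have ha : a ∈ H := by
        have : orbit Bᵐᵒᵖ (a • x) = orbit Bᵐᵒᵖ x := (orbit_eq_iff.mpr hy)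
        simpa [hH, MulAction.mem_stabilizer_iff, hsmul a] using this
      exact ⟨⟨a, ha⟩, rfl⟩
    · rintro ⟨⟨a, ha⟩, rfl⟩
      refine ⟨⟨a, rfl⟩, ?_⟩
      have : a • orbit Bᵐᵒᵖ x = orbit Bᵐᵒᵖ x := ha
      rw [← this]
      exact ⟨x, mem_orbit_self x, rfl⟩
  rw [key]
  -- `H` is a `p`-group.
  have hHp : IsPGroup p H := hA.to_subgroup H
  haveI : Fintype H := Fintype.ofFinite H
  haveI : Finite (orbit H x) := Set.finite_range _
  haveI : Fintype (orbit H x) := Fintype.ofFinite _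
  obtain ⟨n, hn⟩ := IsPGroup.iff_card.mp hHp
  have hdvd : Fintype.card (orbit H x) ∣ p ^ n := by
    rw [← hn, Nat.card_eq_fintype_card]
    exact ⟨_, (card_orbit_mul_card_stabilizer_eq_card_group H x).symm⟩
  obtain ⟨k, _, hk⟩ := (Nat.dvd_prime_pow (Fact.out : p.Prime)).mp hdvd
  exact ⟨k, by rw [Nat.card_eq_fintype_card, hk]⟩
end

section
/- Let G be a group and N a normal subgroup such that the extension N → G → G/N has trivial twisting, i.e. for every g ∈ G, conjugation by g restricted to N is an inner automorphism of N. Then the group of automorphisms of G that restrict to the identity on N and induce the identity on G/N is isomorphic to Hom(G/N, Z(N)), the group of homomorphisms from G/N to the center of N, via f ↦ (g ↦ f(gN)·g). (Kernel statement of Proposition 4.1.) -/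
/-!
Trivial twisting forces `Z(N)` to be central in `G`: if conjugation by `g` agrees on `N` with
conjugation by `n ∈ N`, it fixes `Z(N)`. Hence `g ↦ f(gN) g` is multiplicative for every
`f : G/N →* Z(N)`. Conversely, for `φ` acting trivially on `N` and on `G/N`, the displacement
`g ↦ φ(g) g⁻¹` lies in `N`, centralises `N` (since `φ(g)` and `g` induce the same conjugation
on `N`), and is a homomorphism because its values are central in `G`; it vanishes on `N`, so it
factors through `G/N`. The two constructions are mutually inverse.
-/

open scoped IsMulCommutative

theorem QuotientGroup.mk_mul_of_mem_left_s10 {G : Type*} [Group G] {N : Subgroup G} [N.Normal]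
    {a : G} (ha : a ∈ N) (g : G) : ((a * g : G) : G ⧸ N) = g := by
  rw [QuotientGroup.mk_mul, (QuotientGroup.eq_one_iff a).2 ha, one_mul]

namespace Subgroup

variable {G : Type*} [Group G] (N : Subgroup G)

/-- The twisting `G ⧸ N → Out N` of the extension is trivial. -/
def HasTrivialTwisting : Prop :=
  ∀ g : G, ∃ n ∈ N, ∀ m ∈ N, g * m * g⁻¹ = n * m * n⁻¹

variable {N}

theorem HasTrivialTwisting.commute_center (htw : N.HasTrivialTwisting)
    (z : center N) (g : G) : Commute g ((z : N) : G) := by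
  obtain ⟨n, hn, hconj⟩ := htw g
  have hnz : n * (z : N) = (z : N) * n :=
    congrArg Subtype.val (mem_center_iff.mp z.2 ⟨n, hn⟩)
  calc g * (z : N) = (n * (z : N) * n⁻¹) * g := by rw [← hconj _ (z : N).2]; group
    _ = (z : N) * g := by rw [hnz, mul_inv_cancel_right]

variable (N) [N.Normal]

def autKernel : Subgroup (MulAut G) where
  carrier := {φ | (∀ n ∈ N, φ n = n) ∧ ∀ g, (φ g : G ⧸ N) = g}
  one_mem' := ⟨fun _ _ => rfl, fun _ => rfl⟩
  mul_mem' := by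
    rintro φ ψ ⟨hφN, hφQ⟩ ⟨hψN, hψQ⟩
    exact ⟨fun n hn => by rw [MulAut.mul_apply, hψN n hn, hφN n hn],
      fun g => by rw [MulAut.mul_apply, hφQ, hψQ]⟩
  inv_mem' := by
    rintro φ ⟨hφN, hφQ⟩
    refine ⟨fun n hn => (MulEquiv.symm_apply_eq φ).2 (hφN n hn).symm, fun g => ?_⟩
    conv_rhs => rw [← φ.apply_symm_apply g]
    exact (hφQ _).symm

namespace autKernel

variable {N} {φ : MulAut G}

theorem apply_mul_inv_mem (hφ : φ ∈ N.autKernel) (g : G) : φ g * g⁻¹ ∈ N := by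
  simpa only [div_eq_mul_inv] using QuotientGroup.eq_iff_div_mem.1 (hφ.2 g)

theorem conj_apply_eq_conj (hφ : φ ∈ N.autKernel) (g : G) {m : G} (hm : m ∈ N) :
    φ g * m * (φ g)⁻¹ = g * m * g⁻¹ := by
  rw [← hφ.1 _ (Normal.conj_mem ‹_› m hm g), map_mul, map_mul, map_inv, hφ.1 m hm]

theorem apply_mul_inv_mem_center (hφ : φ ∈ N.autKernel) (g : G) :
    (⟨φ g * g⁻¹, apply_mul_inv_mem hφ g⟩ : N) ∈ center N := by
  refine mem_center_iff.2 fun m => Subtype.ext ?_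
  have hm' : g⁻¹ * (m : G) * g ∈ N := by
    simpa only [inv_inv] using Normal.conj_mem ‹_› (m : G) m.2 g⁻¹
  calc (m : G) * (φ g * g⁻¹) = (φ g * (g⁻¹ * m * g) * (φ g)⁻¹) * (φ g * g⁻¹) := by
        rw [conj_apply_eq_conj hφ g hm']; group
    _ = φ g * g⁻¹ * m := by group

end autKernel

namespace HasTrivialTwisting

variable {N}

def autOfHom (htw : N.HasTrivialTwisting) (f : G ⧸ N →* center N) : MulAut G where
  toFun g := ((f g : N) : G) * g
  invFun g := ((f g : N) : G)⁻¹ * g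
  left_inv g := by
    simp only [QuotientGroup.mk_mul_of_mem_left_s10 (f g : N).2, inv_mul_cancel_left]
  right_inv g := by
    simp only [QuotientGroup.mk_mul_of_mem_left_s10 (N.inv_mem (f g : N).2), mul_inv_cancel_left]
  map_mul' g h := by
    simp only [QuotientGroup.mk_mul, map_mul, coe_mul]
    rw [mul_assoc, mul_assoc, ← mul_assoc g, (htw.commute_center (f h) g).eq, mul_assoc]

theorem autOfHom_mem_autKernel (htw : N.HasTrivialTwisting) (f : G ⧸ N →* center N) :
    htw.autOfHom f ∈ N.autKernel := by
  refine ⟨fun n hn => ?_, fun g => QuotientGroup.mk_mul_of_mem_left_s10 (f g : N).2 g⟩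
  change ((f n : N) : G) * n = n
  rw [(QuotientGroup.eq_one_iff n).2 hn, map_one, OneMemClass.coe_one, OneMemClass.coe_one,
    one_mul]

def homOfAutKernel (htw : N.HasTrivialTwisting) (φ : N.autKernel) : G ⧸ N →* center N :=
  QuotientGroup.lift N
    { toFun g := ⟨_, autKernel.apply_mul_inv_mem_center φ.2 g⟩
      map_one' := by ext; simp
      map_mul' g h := by
        set ψ : MulAut G := φ.1
        have hc : g * (ψ h * h⁻¹) = ψ h * h⁻¹ * g :=
          htw.commute_center ⟨_, autKernel.apply_mul_inv_mem_center φ.2 h⟩ g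
        ext
        change ψ (g * h) * (g * h)⁻¹ = ψ g * g⁻¹ * (ψ h * h⁻¹)
        calc ψ (g * h) * (g * h)⁻¹ = ψ g * g⁻¹ * (g * (ψ h * h⁻¹)) * g⁻¹ := by
              rw [map_mul]; group
          _ = ψ g * g⁻¹ * (ψ h * h⁻¹) := by rw [hc]; group }
    fun n hn => by ext; simp [φ.2.1 n hn]

def homEquivAutKernel (htw : N.HasTrivialTwisting) : (G ⧸ N →* center N) ≃* N.autKernel where
  toFun f := ⟨htw.autOfHom f, htw.autOfHom_mem_autKernel f⟩
  invFun := htw.homOfAutKernel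
  left_inv f := by
    ext g
    exact mul_inv_cancel_right _ _
  right_inv φ := by
    ext g
    exact inv_mul_cancel_right _ _
  map_mul' f₁ f₂ := by
    ext g
    change ((f₁ * f₂) g : N) * g = (f₁ ((f₂ g : N) * g : G) : N) * ((f₂ g : N) * g)
    rw [QuotientGroup.mk_mul_of_mem_left_s10 (f₂ g : N).2, MonoidHom.mul_apply, coe_mul, coe_mul,
      mul_assoc]

end HasTrivialTwisting

end Subgroup

/-- **Kernel statement of Proposition 4.1.** Let `G` be a group and `N` a normal
subgroup such that the extension `N → G → G/N` has trivial twisting: for every `g ∈ G`,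
conjugation by `g` restricted to `N` agrees with conjugation by some element `n ∈ N`.
Then the group `K` of automorphisms of `G` restricting to the identity on `N` and
inducing the identity on `G/N` is isomorphic to `Hom(G/N, Z(N))`, via
`f ↦ (g ↦ f(gN) · g)`. -/
theorem trivial_twisting_kernel_iso_hom {G : Type*} [Group G] (N : Subgroup G) [N.Normal]
    (htw : ∀ g : G, ∃ n ∈ N, ∀ m ∈ N, g * m * g⁻¹ = n * m * n⁻¹)
    (K : Subgroup (MulAut G))
    (hK : ∀ φ : MulAut G, φ ∈ K ↔
      (∀ n ∈ N, φ n = n) ∧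
      (∀ g : G, ((φ g : G) : G ⧸ N) = ((g : G) : G ⧸ N))) :
    ∃ e : ((G ⧸ N) →* ↥(Subgroup.center ↥N)) ≃* K,
      ∀ (f : (G ⧸ N) →* ↥(Subgroup.center ↥N)) (g : G),
        ((e f : MulAut G)) g = ((f ((g : G ⧸ N)) : ↥N) : G) * g := by
  obtain rfl : K = N.autKernel := Subgroup.ext hK
  exact ⟨Subgroup.HasTrivialTwisting.homEquivAutKernel htw, fun _ _ => rfl⟩
end

section
/- Let p be an odd prime and let P be the group with presentation P = ⟨a, b, c | a^{p²} = b^{p²} = c^{p} = 1, c = [b,a], [c,a] = [c,b] = 1⟩ (i.e. c is the commutator of b and a, and c is central). Then the automorphism group of P has order |Aut(P)| = p⁷(p² − 1)(p − 1). (Example 4.3.) -/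
/-!
Realise `P` as `Heis p = ZMod (p²) × ZMod (p²) × ZMod p` with
`(x, y, z) * (x', y', z') = (x + x', y + y', z + z' + ȳ x̄')`, bars denoting reduction mod `p`,
where `a = (1, 0, 0)`, `b = (0, 1, 0)` and `c = ⁅b, a⁆ = (0, 0, 1)`.

In any group, if `u, v` have order dividing `p²` and `⁅v, u⁆` has order dividing `p` and commutes
with `u` and `v`, then the words `u^x v^y ⁅v, u⁆^z` multiply by the same rule, so
`(x, y, z) ↦ u^x v^y ⁅v, u⁆^z` is a homomorphism out of `Heis p`. This gives `P ≃* Heis p`, and,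
since every pair `(u, v)` in `Heis p` qualifies, endomorphisms of `Heis p` correspond to arbitrary
pairs `(u, v)`. The `z`-coordinate of `⁅v, u⁆` is the determinant of the reduction mod `p` of
`(u, v)`, and an endomorphism is bijective exactly when that determinant is a unit. So automorphisms
correspond to a matrix in `GL₂(𝔽_p)` together with six free digits:
`|Aut P| = (p² - 1)(p² - p) p⁶`.
-/

open scoped commutatorElement

section PowZModVal

variable {M : Type*} [Monoid M] {g : M} {n : ℕ}

theorem pow_mod_eq_of_pow_eq_one (h : g ^ n = 1) (m : ℕ) : g ^ (m % n) = g ^ m := by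
  conv_rhs => rw [← Nat.div_add_mod m n, pow_add, pow_mul, h, one_pow, one_mul]

theorem pow_zmod_val_natCast (h : g ^ n = 1) (m : ℕ) : g ^ (m : ZMod n).val = g ^ m := by
  rw [ZMod.val_natCast, pow_mod_eq_of_pow_eq_one h]

theorem pow_zmod_val_add [NeZero n] (h : g ^ n = 1) (u v : ZMod n) :
    g ^ (u + v).val = g ^ u.val * g ^ v.val := by
  rw [ZMod.val_add, pow_mod_eq_of_pow_eq_one h, pow_add]

end PowZModVal

section CentralCommutator

variable {G : Type*} [Group G] {a b : G}

theorem pow_mul_pow_eq_commutator_pow_mul (ha : Commute ⁅b, a⁆ a) (hb : Commute ⁅b, a⁆ b)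
    (m n : ℕ) : b ^ m * a ^ n = ⁅b, a⁆ ^ (m * n) * a ^ n * b ^ m := by
  have hconj : b * a ^ n * b⁻¹ = ⁅b, a⁆ ^ n * a ^ n := by
    rw [← conj_pow, ← ha.mul_pow, commutatorElement_def, inv_mul_cancel_right]
  induction m with
  | zero => simp
  | succ m ih =>
    calc b ^ (m + 1) * a ^ n = b * (b ^ m * a ^ n) := by group
      _ = b * ⁅b, a⁆ ^ (m * n) * a ^ n * b ^ m := by rw [ih]; group
      _ = ⁅b, a⁆ ^ (m * n) * (b * a ^ n * b⁻¹) * b ^ (m + 1) := by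
        rw [← (hb.pow_left _).eq]; group
      _ = ⁅b, a⁆ ^ ((m + 1) * n) * a ^ n * b ^ (m + 1) := by
        rw [hconj, add_one_mul, pow_add]; group

theorem normalForm_mul (ha : Commute ⁅b, a⁆ a) (hb : Commute ⁅b, a⁆ b) (x₁ y₁ z₁ x₂ y₂ z₂ : ℕ) :
    a ^ x₁ * b ^ y₁ * ⁅b, a⁆ ^ z₁ * (a ^ x₂ * b ^ y₂ * ⁅b, a⁆ ^ z₂) =
      a ^ (x₁ + x₂) * b ^ (y₁ + y₂) * ⁅b, a⁆ ^ (z₁ + z₂ + y₁ * x₂) := by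
  have hc : ∀ k i j : ℕ, Commute (⁅b, a⁆ ^ k) (a ^ i * b ^ j) := fun k i j =>
    (ha.pow_pow k i).mul_right (hb.pow_pow k j)
  calc a ^ x₁ * b ^ y₁ * ⁅b, a⁆ ^ z₁ * (a ^ x₂ * b ^ y₂ * ⁅b, a⁆ ^ z₂)
      = a ^ x₁ * b ^ y₁ * (⁅b, a⁆ ^ z₁ * (a ^ x₂ * b ^ y₂)) * ⁅b, a⁆ ^ z₂ := by group
    _ = a ^ x₁ * (b ^ y₁ * a ^ x₂) * b ^ y₂ * ⁅b, a⁆ ^ (z₁ + z₂) := by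
        rw [(hc z₁ x₂ y₂).eq, pow_add]; group
    _ = a ^ x₁ * ⁅b, a⁆ ^ (y₁ * x₂) * a ^ x₂ * b ^ y₁ * b ^ y₂ * ⁅b, a⁆ ^ (z₁ + z₂) := by
        rw [pow_mul_pow_eq_commutator_pow_mul ha hb]; group
    _ = ⁅b, a⁆ ^ (y₁ * x₂) * (a ^ (x₁ + x₂) * b ^ (y₁ + y₂)) * ⁅b, a⁆ ^ (z₁ + z₂) := by
        rw [← (ha.pow_pow _ x₁).eq, pow_add, pow_add]; group
    _ = a ^ (x₁ + x₂) * b ^ (y₁ + y₂) * ⁅b, a⁆ ^ (z₁ + z₂ + y₁ * x₂) := by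
        rw [(hc _ _ _).eq, mul_assoc, ← pow_add, add_comm (y₁ * x₂)]

end CentralCommutator

theorem Nat.card_subtype_fst_of_equiv {α β γ : Type*} (e : α ≃ β × γ) (P : β → Prop) :
    Nat.card {a // P (e a).1} = Nat.card {b // P b} * Nat.card γ := by
  rw [Nat.card_congr ((e.subtypeEquiv fun _ => Iff.rfl).trans Equiv.prodSubtypeFstEquivSubtypeProd),
    Nat.card_prod]

theorem Matrix.card_isUnit_det {n K : Type*} [Fintype n] [DecidableEq n] [CommRing K] :
    Nat.card {M : Matrix n n K // IsUnit M.det} = Nat.card (GL n K) := by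
  simp_rw [← Matrix.isUnit_iff_isUnit_det]
  exact Nat.card_range_of_injective Units.val_injective

section ZModSq

variable (n : ℕ) [NeZero n]

/-- Base-`n` digits of the representative in `[0, n²)`, least significant first. -/
def zmodSqEquiv : ZMod (n ^ 2) ≃ ZMod n × ZMod n where
  toFun u := (u.val, (u.val / n : ℕ))
  invFun t := (t.1.val + n * t.2.val : ℕ)
  left_inv u := by
    have hdiv : u.val / n < n := Nat.div_lt_of_lt_mul (by rw [← sq]; exact u.val_lt)
    simp only [ZMod.val_natCast, Nat.mod_eq_of_lt hdiv, Nat.mod_add_div, ZMod.natCast_zmod_val]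
  right_inv t := by
    have hlt : t.1.val + n * t.2.val < n ^ 2 := by nlinarith [t.1.val_lt, t.2.val_lt]
    refine Prod.ext ?_ ?_ <;> simp only [ZMod.val_natCast, Nat.mod_eq_of_lt hlt]
    · simp
    · rw [Nat.add_mul_div_left _ _ (Nat.pos_of_neZero n), Nat.div_eq_of_lt t.1.val_lt, zero_add,
        ZMod.natCast_zmod_val]

theorem zmodSqEquiv_fst (u : ZMod (n ^ 2)) :
    (zmodSqEquiv n u).1 = ZMod.castHom (dvd_pow_self n two_ne_zero) (ZMod n) u := by
  rw [ZMod.castHom_apply, ZMod.cast_eq_val]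
  rfl

end ZModSq

@[ext]
structure Heis (p : ℕ) where
  x : ZMod (p ^ 2)
  y : ZMod (p ^ 2)
  z : ZMod p

namespace Heis

variable {p : ℕ}

def reduce : ZMod (p ^ 2) →+* ZMod p :=
  ZMod.castHom (dvd_pow_self p two_ne_zero) _

instance : Mul (Heis p) := ⟨fun g h => ⟨g.x + h.x, g.y + h.y, g.z + h.z + reduce g.y * reduce h.x⟩⟩
instance : One (Heis p) := ⟨⟨0, 0, 0⟩⟩
instance : Inv (Heis p) := ⟨fun g => ⟨-g.x, -g.y, -g.z + reduce g.y * reduce g.x⟩⟩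

@[simp] theorem mul_x (g h : Heis p) : (g * h).x = g.x + h.x := rfl
@[simp] theorem mul_y (g h : Heis p) : (g * h).y = g.y + h.y := rfl
@[simp] theorem mul_z (g h : Heis p) : (g * h).z = g.z + h.z + reduce g.y * reduce h.x := rfl
@[simp] theorem one_x : (1 : Heis p).x = 0 := rfl
@[simp] theorem one_y : (1 : Heis p).y = 0 := rfl
@[simp] theorem one_z : (1 : Heis p).z = 0 := rfl
@[simp] theorem inv_x (g : Heis p) : g⁻¹.x = -g.x := rfl
@[simp] theorem inv_y (g : Heis p) : g⁻¹.y = -g.y := rfl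
@[simp] theorem inv_z (g : Heis p) : g⁻¹.z = -g.z + reduce g.y * reduce g.x := rfl

instance : Group (Heis p) where
  mul_assoc g h k := by ext <;> simp only [mul_x, mul_y, mul_z, map_add] <;> ring
  one_mul g := by ext <;> simp
  mul_one g := by ext <;> simp
  inv_mul_cancel g := by ext <;> simp

@[simps] def A : Heis p := ⟨1, 0, 0⟩
@[simps] def B : Heis p := ⟨0, 1, 0⟩

theorem pow_eq (g : Heis p) (n : ℕ) :
    g ^ n = ⟨n * g.x, n * g.y, n * g.z + n.choose 2 * (reduce g.y * reduce g.x)⟩ := by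
  induction n with
  | zero => ext <;> simp
  | succ n ih =>
    rw [pow_succ, ih]
    ext <;> simp only [mul_x, mul_y, mul_z, map_mul, map_natCast, Nat.cast_add, Nat.cast_one,
      Nat.choose_succ_succ, Nat.choose_one_right] <;> ring

theorem commutator_eq (g h : Heis p) :
    ⁅g, h⁆ = ⟨0, 0, reduce g.y * reduce h.x - reduce h.y * reduce g.x⟩ := by
  ext <;> simp only [commutatorElement_def, mul_x, mul_y, mul_z, inv_x, inv_y, inv_z, map_add,
    map_neg] <;> ring

def linearPart (u v : Heis p) : Matrix (Fin 2) (Fin 2) (ZMod p) :=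
  !![reduce u.x, reduce u.y; reduce v.x, reduce v.y]

theorem commutator_eq_det (u v : Heis p) : ⁅v, u⁆ = ⟨0, 0, (linearPart u v).det⟩ := by
  rw [commutator_eq, linearPart, Matrix.det_fin_two_of, mul_comm (reduce v.y)]

theorem commute_commutator (g h k : Heis p) : Commute ⁅g, h⁆ k := by
  ext <;> simp only [commutator_eq, mul_x, mul_y, mul_z, map_zero, zero_mul, mul_zero] <;> ring

theorem commutator_pow_p_eq_one (g h : Heis p) : ⁅g, h⁆ ^ p = 1 := by
  ext <;> simp [commutator_eq, pow_eq]

/-- `g ^ p` reduces to `0` mod `p` in its first two coordinates, so its `p`-th power has no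
correction term. -/
theorem pow_p_sq_eq_one (g : Heis p) : g ^ p ^ 2 = 1 := by
  rw [sq, pow_mul, pow_eq, pow_eq]
  ext <;> simp [← mul_assoc, ← sq, ← Nat.cast_pow]

theorem normalForm_eq [NeZero p] (g : Heis p) :
    A ^ g.x.val * B ^ g.y.val * ⁅(B : Heis p), A⁆ ^ g.z.val = g := by
  ext <;> simp [pow_eq, commutator_eq]

section Lift

variable [NeZero p] {G : Type*} [Group G]

theorem reduce_eq_natCast_val (u : ZMod (p ^ 2)) : reduce u = (u.val : ZMod p) := by
  rw [reduce, ZMod.castHom_apply, ZMod.cast_eq_val]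

def lift (u v : G) (hu : u ^ p ^ 2 = 1) (hv : v ^ p ^ 2 = 1) (hc : ⁅v, u⁆ ^ p = 1)
    (hcu : Commute ⁅v, u⁆ u) (hcv : Commute ⁅v, u⁆ v) : Heis p →* G where
  toFun g := u ^ g.x.val * v ^ g.y.val * ⁅v, u⁆ ^ g.z.val
  map_one' := by simp
  map_mul' g h := by
    have hz : reduce g.y * reduce h.x = ((g.y.val * h.x.val : ℕ) : ZMod p) := by
      rw [reduce_eq_natCast_val, reduce_eq_natCast_val, Nat.cast_mul]
    rw [normalForm_mul hcu hcv, mul_x, mul_y, mul_z, hz, pow_zmod_val_add hu,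
      pow_zmod_val_add hv, pow_zmod_val_add hc, pow_zmod_val_add hc, pow_zmod_val_natCast hc,
      pow_add, pow_add, pow_add, pow_add]

variable {u v : G} {hu : u ^ p ^ 2 = 1} {hv : v ^ p ^ 2 = 1} {hc : ⁅v, u⁆ ^ p = 1}
  {hcu : Commute ⁅v, u⁆ u} {hcv : Commute ⁅v, u⁆ v}

theorem lift_apply (g : Heis p) :
    lift u v hu hv hc hcu hcv g = u ^ g.x.val * v ^ g.y.val * ⁅v, u⁆ ^ g.z.val := rfl

@[simp] theorem lift_A : lift u v hu hv hc hcu hcv A = u := by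
  simpa [lift_apply] using pow_zmod_val_natCast hu 1

@[simp] theorem lift_B : lift u v hu hv hc hcu hcv B = v := by
  simpa [lift_apply] using pow_zmod_val_natCast hv 1

theorem hom_ext {f f' : Heis p →* G} (hA : f A = f' A) (hB : f B = f' B) : f = f' := by
  ext g
  rw [← normalForm_eq g]
  simp only [map_mul, map_pow, map_commutatorElement, hA, hB]

end Lift

end Heis

def heisRels (p : ℕ) : Set (FreeGroup (Fin 3)) :=
  {FreeGroup.of (0 : Fin 3) ^ p ^ 2, FreeGroup.of (1 : Fin 3) ^ p ^ 2,
    FreeGroup.of (2 : Fin 3) ^ p,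
    (FreeGroup.of (2 : Fin 3))⁻¹ * ⁅FreeGroup.of (1 : Fin 3), FreeGroup.of (0 : Fin 3)⁆,
    ⁅FreeGroup.of (2 : Fin 3), FreeGroup.of (0 : Fin 3)⁆,
    ⁅FreeGroup.of (2 : Fin 3), FreeGroup.of (1 : Fin 3)⁆}

abbrev HeisPresented (p : ℕ) := PresentedGroup (heisRels p)

namespace HeisPresented

variable {p : ℕ}

def a : HeisPresented p := PresentedGroup.of 0
def b : HeisPresented p := PresentedGroup.of 1
def c : HeisPresented p := PresentedGroup.of 2

theorem a_pow : (a : HeisPresented p) ^ p ^ 2 = 1 := by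
  simpa [a, PresentedGroup.of] using
    PresentedGroup.one_of_mem (rels := heisRels p) (x := .of 0 ^ p ^ 2) (by simp [heisRels])

theorem b_pow : (b : HeisPresented p) ^ p ^ 2 = 1 := by
  simpa [b, PresentedGroup.of] using
    PresentedGroup.one_of_mem (rels := heisRels p) (x := .of 1 ^ p ^ 2) (by simp [heisRels])

theorem c_pow : (c : HeisPresented p) ^ p = 1 := by
  simpa [c, PresentedGroup.of] using
    PresentedGroup.one_of_mem (rels := heisRels p) (x := .of 2 ^ p) (by simp [heisRels])

theorem commutator_b_a : ⁅(b : HeisPresented p), (a : HeisPresented p)⁆ = c := by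
  have h := PresentedGroup.one_of_mem (rels := heisRels p)
    (x := (FreeGroup.of (2 : Fin 3))⁻¹ * ⁅FreeGroup.of (1 : Fin 3), FreeGroup.of (0 : Fin 3)⁆)
    (by simp [heisRels])
  rw [map_mul, map_inv, map_commutatorElement, inv_mul_eq_one] at h
  exact h.symm

theorem commute_c_a : Commute (c : HeisPresented p) a := by
  have h := PresentedGroup.one_of_mem (rels := heisRels p)
    (x := ⁅FreeGroup.of (2 : Fin 3), FreeGroup.of (0 : Fin 3)⁆) (by simp [heisRels])
  rwa [map_commutatorElement, commutatorElement_eq_one_iff_commute] at h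

theorem commute_c_b : Commute (c : HeisPresented p) b := by
  have h := PresentedGroup.one_of_mem (rels := heisRels p)
    (x := ⁅FreeGroup.of (2 : Fin 3), FreeGroup.of (1 : Fin 3)⁆) (by simp [heisRels])
  rwa [map_commutatorElement, commutatorElement_eq_one_iff_commute] at h

open Heis in
def toHeis : HeisPresented p →* Heis p :=
  PresentedGroup.toGroup (f := ![A, B, ⁅(B : Heis p), A⁆]) <| by
    intro r hr
    simp only [heisRels, Set.mem_insert_iff, Set.mem_singleton_iff] at hr
    rcases hr with rfl | rfl | rfl | rfl | rfl | rfl <;>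
      simp [-commutatorElement_inv, pow_p_sq_eq_one, commutator_pow_p_eq_one,
        commutatorElement_eq_one_iff_commute.mpr (commute_commutator _ _ _)]

@[simp] theorem toHeis_a : toHeis (a : HeisPresented p) = Heis.A := PresentedGroup.toGroup.of _
@[simp] theorem toHeis_b : toHeis (b : HeisPresented p) = Heis.B := PresentedGroup.toGroup.of _
@[simp] theorem toHeis_c : toHeis (c : HeisPresented p) = ⁅(Heis.B : Heis p), Heis.A⁆ :=
  PresentedGroup.toGroup.of _

variable [NeZero p]

def ofHeis : Heis p →* HeisPresented p :=
  Heis.lift a b a_pow b_pow (by rw [commutator_b_a, c_pow]) (commutator_b_a ▸ commute_c_a)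
    (commutator_b_a ▸ commute_c_b)

@[simp] theorem ofHeis_A : ofHeis (Heis.A : Heis p) = a := Heis.lift_A
@[simp] theorem ofHeis_B : ofHeis (Heis.B : Heis p) = b := Heis.lift_B

def mulEquivHeis : HeisPresented p ≃* Heis p :=
  MonoidHom.toMulEquiv toHeis ofHeis
    (PresentedGroup.ext fun i => by
      fin_cases i
      · change ofHeis (toHeis a) = a
        simp
      · change ofHeis (toHeis b) = b
        simp
      · change ofHeis (toHeis c) = c
        simp [commutator_b_a])
    (Heis.hom_ext (by simp) (by simp))

end HeisPresented

namespace Heis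

variable {p : ℕ}

theorem isUnit_of_isUnit_reduce [NeZero p] {u : ZMod (p ^ 2)} (h : IsUnit (reduce u)) :
    IsUnit u := by
  rw [reduce_eq_natCast_val, ZMod.isUnit_iff_coprime] at h
  simpa using (ZMod.isUnit_iff_coprime _ _).mpr (h.pow_right 2)

section Automorphisms

variable [Fact p.Prime]

def endOf (u v : Heis p) : Heis p →* Heis p :=
  lift u v (pow_p_sq_eq_one u) (pow_p_sq_eq_one v) (commutator_pow_p_eq_one v u)
    (commute_commutator v u u) (commute_commutator v u v)

theorem endOf_injective {u v : Heis p} (h : IsUnit (linearPart u v).det) :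
    Function.Injective (endOf u v) := by
  rw [injective_iff_map_eq_one]
  intro g hg
  have hD : IsUnit (u.x * v.y - u.y * v.x) :=
    isUnit_of_isUnit_reduce (by simpa [linearPart, Matrix.det_fin_two_of] using h)
  have hx := congrArg Heis.x hg
  have hy := congrArg Heis.y hg
  simp only [endOf, lift_apply, pow_eq, commutator_eq, ZMod.natCast_val, ZMod.cast_id', id_eq,
    mul_zero, map_zero, add_zero, mul_x, one_x, mul_y, one_y] at hx hy
  have hgx : g.x = 0 := hD.mul_left_eq_zero.mp (by linear_combination v.y * hx - v.x * hy)
  have hgy : g.y = 0 := hD.mul_left_eq_zero.mp (by linear_combination u.x * hy - u.y * hx)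
  have hz := congrArg Heis.z hg
  simp only [endOf, lift_apply, hgx, hgy, ZMod.val_zero, pow_zero, one_mul, commutator_eq_det,
    pow_eq, ZMod.natCast_val, ZMod.cast_id', id_eq, mul_zero, map_zero, add_zero, one_z,
    mul_eq_zero] at hz
  exact Heis.ext hgx hgy (hz.resolve_right h.ne_zero)

theorem isUnit_det_linearPart (f : MulAut (Heis p)) : IsUnit (linearPart (f A) (f B)).det := by
  refine isUnit_iff_ne_zero.mpr fun h0 => ?_
  have : f ⁅(B : Heis p), A⁆ = f 1 := by
    rw [map_commutatorElement, commutator_eq_det, h0, map_one]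
    rfl
  simpa [commutator_eq] using congrArg Heis.z (f.injective this)

instance : Finite (Heis p) :=
  Finite.of_injective (fun g : Heis p => (g.x, g.y, g.z)) fun g h hgh => by
    simpa [Heis.ext_iff] using hgh

noncomputable def mulAutEquiv :
    MulAut (Heis p) ≃ {q : Heis p × Heis p // IsUnit (linearPart q.1 q.2).det} where
  toFun f := ⟨(f A, f B), isUnit_det_linearPart f⟩
  invFun q := MulEquiv.ofBijective (endOf q.1.1 q.1.2)
    (Finite.injective_iff_bijective.mp (endOf_injective q.2))
  left_inv f := MulEquiv.toMonoidHom_injective (hom_ext (by simp [endOf]) (by simp [endOf]))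
  right_inv q := by simp [endOf]

end Automorphisms

section Counting

variable [NeZero p]

theorem reduce_zmodSqEquiv_symm (t : ZMod p × ZMod p) : reduce ((zmodSqEquiv p).symm t) = t.1 := by
  rw [reduce, ← zmodSqEquiv_fst, Equiv.apply_symm_apply]

theorem zmodSqEquiv_symm_reduce (u : ZMod (p ^ 2)) :
    (zmodSqEquiv p).symm (reduce u, (zmodSqEquiv p u).2) = u := by
  rw [reduce, ← zmodSqEquiv_fst, Equiv.symm_apply_apply]

def digitsEquiv : Heis p ≃ (Fin 2 → ZMod p) × (ZMod p × ZMod p × ZMod p) where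
  toFun g := (![reduce g.x, reduce g.y], ((zmodSqEquiv p g.x).2, (zmodSqEquiv p g.y).2, g.z))
  invFun t := ⟨(zmodSqEquiv p).symm (t.1 0, t.2.1), (zmodSqEquiv p).symm (t.1 1, t.2.2.1), t.2.2.2⟩
  left_inv g := by
    ext <;> simp [zmodSqEquiv_symm_reduce]
  right_inv t := by
    refine Prod.ext (funext fun i => ?_) ?_
    · fin_cases i <;> simp [reduce_zmodSqEquiv_symm]
    · simp

def pairEquiv : Heis p × Heis p ≃
    Matrix (Fin 2) (Fin 2) (ZMod p) × ((ZMod p × ZMod p × ZMod p) × (ZMod p × ZMod p × ZMod p)) :=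
  (digitsEquiv.prodCongr digitsEquiv).trans <| (Equiv.prodProdProdComm _ _ _ _).trans <|
    ((finTwoArrowEquiv _).symm.trans Matrix.of).prodCongr (Equiv.refl _)

theorem pairEquiv_fst (q : Heis p × Heis p) : (pairEquiv q).1 = linearPart q.1 q.2 := by
  ext i j
  fin_cases i <;> fin_cases j <;> rfl

end Counting

theorem card_mulAut [Fact p.Prime] :
    Nat.card (MulAut (Heis p)) = Nat.card (GL (Fin 2) (ZMod p)) * p ^ 6 := by
  rw [Nat.card_congr mulAutEquiv]
  simp_rw [← pairEquiv_fst]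
  rw [Nat.card_subtype_fst_of_equiv pairEquiv fun M => IsUnit M.det, Matrix.card_isUnit_det]
  simp only [Nat.card_prod, Nat.card_zmod]
  ring

end Heis

theorem card_aut_example_general (p : ℕ) (hp : p.Prime) :
    Nat.card (MulAut (PresentedGroup
      ({FreeGroup.of (0 : Fin 3) ^ p ^ 2, FreeGroup.of (1 : Fin 3) ^ p ^ 2,
        FreeGroup.of (2 : Fin 3) ^ p,
        (FreeGroup.of (2 : Fin 3))⁻¹ * ⁅FreeGroup.of (1 : Fin 3), FreeGroup.of (0 : Fin 3)⁆,
        ⁅FreeGroup.of (2 : Fin 3), FreeGroup.of (0 : Fin 3)⁆,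
        ⁅FreeGroup.of (2 : Fin 3), FreeGroup.of (1 : Fin 3)⁆} : Set (FreeGroup (Fin 3))))) =
      p ^ 7 * (p ^ 2 - 1) * (p - 1) := by
  have : Fact p.Prime := ⟨hp⟩
  calc Nat.card (MulAut (HeisPresented p))
      = Nat.card (MulAut (Heis p)) :=
        Nat.card_congr (MulAut.congr HeisPresented.mulEquivHeis).toEquiv
    _ = Nat.card (GL (Fin 2) (ZMod p)) * p ^ 6 := Heis.card_mulAut
    _ = p ^ 7 * (p ^ 2 - 1) * (p - 1) := by
        rw [Matrix.card_GL_field, Fin.prod_univ_two, ZMod.card]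
        simp only [Fin.val_zero, Fin.val_one, pow_zero, pow_one, sq, ← Nat.mul_sub_one]
        ring

/-- **Example 4.3.** Let `p` be an odd prime and
`P = ⟨a, b, c | a^{p²} = b^{p²} = c^p = 1, c = [b,a], [c,a] = [c,b] = 1⟩`
(a presented group on generators `a = of 0`, `b = of 1`, `c = of 2`).  Then
`|Aut(P)| = p⁷(p² − 1)(p − 1)`. -/
theorem card_aut_example (p : ℕ) (hp : p.Prime) (hodd : Odd p) :
    Nat.card (MulAut (PresentedGroup
      ({FreeGroup.of (0 : Fin 3) ^ p ^ 2, FreeGroup.of (1 : Fin 3) ^ p ^ 2,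
        FreeGroup.of (2 : Fin 3) ^ p,
        (FreeGroup.of (2 : Fin 3))⁻¹ * ⁅FreeGroup.of (1 : Fin 3), FreeGroup.of (0 : Fin 3)⁆,
        ⁅FreeGroup.of (2 : Fin 3), FreeGroup.of (0 : Fin 3)⁆,
        ⁅FreeGroup.of (2 : Fin 3), FreeGroup.of (1 : Fin 3)⁆} : Set (FreeGroup (Fin 3))))) =
      p ^ 7 * (p ^ 2 - 1) * (p - 1) :=
  card_aut_example_general p hp
end

section
/- Let P = U₄(𝔽₂) be the group of 4×4 upper triangular matrices over 𝔽₂ with ones on the diagonal (the unipotent subgroup of GL₄(𝔽₂)), and let Φ(P) denote its Frattini subgroup, so V = P/Φ(P) is elementary abelian of rank 3. Then the image of the natural homomorphism Aut(P) → Aut(V) (induced since Φ(P) is characteristic) is isomorphic to the symmetric group Σ₃ of order 6. (Application 3.) -/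
/-!
`Φ(P)` is the kernel of the superdiagonal map `P → 𝔽₂³`, `g ↦ (g₁₂, g₂₃, g₃₄)`: each coordinate
has kernel of index 2, and conversely the kernel consists of products of commutators, while
`[P, P] ≤ Φ(P)` because `P` is nilpotent.

An automorphism of `P` preserves the set of elements with `g² = 1`, so its action on `V = P/Φ(P)`
preserves the classes all of whose elements square to one, namely `1` and the "pure" class
`[x₂₃]`, and the "mixed" classes containing elements of both kinds, namely `[x₁₂]`, `[x₃₄]` and
`[x₁₂x₃₄]`. These generate `V`, so the image of `Aut(P)` acts faithfully on the mixed classes. The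
flip in the antidiagonal and an automorphism sending `x₃₄` to `x₁₂x₃₄` act on them as two
adjacent transpositions, so this action is onto `Σ₃`.
-/

open Matrix Multiplicative
open scoped commutatorElement

namespace Matrix

variable {n R : Type*} [Fintype n] [LinearOrder n] [CommRing R]

theorem IsUpperTriangular.mul_apply_self {M N : Matrix n n R} (hM : M.IsUpperTriangular)
    (hN : N.IsUpperTriangular) (i : n) : (M * N) i i = M i i * N i i := by
  rw [mul_apply, Finset.sum_eq_single i]
  · intro k _ hki
    rcases hki.lt_or_gt with hk | hk
    · rw [hM hk, zero_mul]
    · rw [hN hk, mul_zero]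
  · simp

variable (n R) [DecidableEq n]

def unitriangularGroup : Subgroup (GL n R) where
  carrier := {A | (A : Matrix n n R).IsUpperTriangular ∧ ∀ i, (A : Matrix n n R) i i = 1}
  one_mem' := ⟨blockTriangular_one, fun i => one_apply_eq i⟩
  mul_mem' := by
    rintro A B ⟨hA, hA'⟩ ⟨hB, hB'⟩
    refine ⟨hA.mul hB, fun i => ?_⟩
    rw [Units.val_mul, hA.mul_apply_self hB, hA', hB', one_mul]
  inv_mem' := by
    rintro A ⟨hA, hA'⟩
    have hA_inv : (↑A⁻¹ : Matrix n n R).IsUpperTriangular := by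
      rw [coe_units_inv]
      exact blockTriangular_inv_of_blockTriangular hA
    refine ⟨hA_inv, fun i => ?_⟩
    have h := congr_fun₂ (Units.inv_mul A) i i
    rwa [hA_inv.mul_apply_self hA, hA', mul_one, one_apply_eq] at h

end Matrix

section Frattini

variable {G : Type*} [Group G]

theorem commutator_le_of_isCoatom {K : Subgroup G} [K.Normal] (hK : IsCoatom K) :
    commutator G ≤ K := by
  have : IsSimpleOrder (Subgroup (G ⧸ K)) :=
    (OrderIso.isSimpleOrder_iff (β := Set.Ici K) (QuotientGroup.comapMk'OrderIso K)).2
      (Set.isSimpleOrder_Ici_iff_isCoatom.2 hK)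
  refine Subgroup.Normal.quotient_commutative_iff_commutator_le.1 ⟨⟨fun x y => ?_⟩⟩
  obtain rfl | hx := eq_or_ne x 1
  · rw [one_mul, mul_one]
  obtain ⟨k, rfl⟩ : y ∈ Subgroup.zpowers x := by
    rw [(eq_bot_or_eq_top _).resolve_left (Subgroup.zpowers_ne_bot.2 hx)]
    trivial
  exact (Commute.self_zpow x k).eq

theorem commutator_le_frattini [Group.IsNilpotent G] : commutator G ≤ frattini G :=
  le_iInf₂ fun K hK =>
    have := Subgroup.NormalizerCondition.normal_of_coatom K
      Group.normalizerCondition_of_isNilpotent hK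
    commutator_le_of_isCoatom hK

theorem frattini_le_ker_of_surjective {ι : Type*} {p : ℕ} [Fact p.Prime]
    {f : G →* Multiplicative (ι → ZMod p)} (hf : Function.Surjective f) :
    frattini G ≤ f.ker := by
  have : IsSimpleGroup (Multiplicative (ZMod p)) :=
    isSimpleGroup_of_prime_card (p := p) (by simp [Nat.card_eq_fintype_card])
  intro g hg
  refine MonoidHom.mem_ker.2 (funext fun i => ?_)
  let χ : G →* Multiplicative (ZMod p) :=
    (Pi.evalAddMonoidHom (fun _ => ZMod p) i).toMultiplicative.comp f
  have hχ : Function.Surjective χ := (Function.surjective_eval i).comp hf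
  exact frattini_le_coatom (Subgroup.isCoatom_comap_of_surjective hχ isCoatom_bot) hg

end Frattini

section QuotientAut

variable {G : Type*} [Group G]

theorem MulEquiv.image_setOf_pow_eq_one {H : Type*} [Group H] (φ : G ≃* H) (n : ℕ) :
    φ '' {g : G | g ^ n = 1} = {h | h ^ n = 1} :=
  Set.ext fun h => ⟨by rintro ⟨g, hg, rfl⟩; simpa [← map_pow] using hg,
    fun hh => ⟨φ.symm h, by simpa [← map_pow] using hh, φ.apply_symm_apply h⟩⟩

variable {N : Subgroup G} [N.Normal] {σ : MulAut (G ⧸ N)} {φ : MulAut G}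

theorem image_image_mk_of_image_eq (hσ : ∀ g : G, σ g = φ g) {S : Set G} (hS : φ '' S = S) :
    σ '' ((↑) '' S : Set (G ⧸ N)) = (↑) '' S := by
  conv_rhs => rw [← hS]
  simp only [Set.image_image, hσ]

theorem image_image_mk_compl_of_image_eq (hσ : ∀ g : G, σ g = φ g) {S : Set G}
    (hS : φ '' S = S) : σ '' ((↑) '' Sᶜ : Set (G ⧸ N)) = (↑) '' Sᶜ :=
  image_image_mk_of_image_eq hσ (by rw [Set.image_compl_eq φ.bijective, hS])

end QuotientAut

section RangePermHom

open Pointwise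

variable {H X ι : Type*} [Group H] [MulAction H X] {t : ι → X}

noncomputable def rangePermHom (ht : Function.Injective t)
    (hH : ∀ h : H, h • Set.range t = Set.range t) : H →* Equiv.Perm ι :=
  ((Equiv.ofInjective t ht).symm.permCongrHom.toMonoidHom.comp
    (MulAction.toPermHom (MulAction.stabilizer H (Set.range t)) (Set.range t))).comp
    ((MonoidHom.id H).codRestrict _ hH)

theorem apply_rangePermHom (ht : Function.Injective t)
    (hH : ∀ h : H, h • Set.range t = Set.range t) (h : H) (i : ι) :
    t (rangePermHom ht hH h i) = h • t i := by
  simp only [rangePermHom, MonoidHom.coe_comp, Function.comp_apply, MulEquiv.coe_toMonoidHom,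
    Equiv.permCongrHom_coe, Equiv.permCongr_apply, Equiv.symm_symm, MulAction.toPermHom_apply,
    MulAction.toPerm_apply, Equiv.apply_ofInjective_symm]
  rfl

end RangePermHom

namespace UnitriangularF2

local notation "U₄" => unitriangularGroup (Fin 4) (ZMod 2)

def unitri (a b c d e f : ZMod 2) : Matrix (Fin 4) (Fin 4) (ZMod 2) :=
  !![1, a, b, c; 0, 1, d, e; 0, 0, 1, f; 0, 0, 0, 1]

theorem unitri_mul (a b c d e f a' b' c' d' e' f' : ZMod 2) :
    unitri a b c d e f * unitri a' b' c' d' e' f' =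
      unitri (a + a') (b + b' + a * d') (c + c' + a * e' + b * f') (d + d')
        (e + e' + d * f') (f + f') := by
  ext i j
  fin_cases i <;> fin_cases j <;>
    simp [unitri, mul_apply, Fin.sum_univ_four] <;> ring

theorem unitri_zero : unitri 0 0 0 0 0 0 = 1 := by
  ext i j
  fin_cases i <;> fin_cases j <;> rfl

theorem unitri_mul_unitri_inv (a b c d e f : ZMod 2) :
    unitri a b c d e f * unitri a (b + a * d) (c + a * e + b * f + a * d * f) d (e + d * f) f
      = 1 := by
  rw [unitri_mul, ← unitri_zero]
  congr 1 <;> grind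

theorem unitri_inv_mul_unitri (a b c d e f : ZMod 2) :
    unitri a (b + a * d) (c + a * e + b * f + a * d * f) d (e + d * f) f * unitri a b c d e f
      = 1 := by
  rw [unitri_mul, ← unitri_zero]
  congr 1 <;> grind

def ofEntries (a b c d e f : ZMod 2) : U₄ :=
  ⟨⟨unitri a b c d e f, _, unitri_mul_unitri_inv a b c d e f, unitri_inv_mul_unitri a b c d e f⟩,
    fun i j hij => by fin_cases i <;> fin_cases j <;> first | rfl | exact absurd hij (by decide),
    fun i => by fin_cases i <;> rfl⟩

def entry (g : U₄) (i j : Fin 4) : ZMod 2 := (g : GL (Fin 4) (ZMod 2)) i j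

theorem eq_ofEntries (g : U₄) :
    g = ofEntries (entry g 0 1) (entry g 0 2) (entry g 0 3) (entry g 1 2) (entry g 1 3)
      (entry g 2 3) := by
  obtain ⟨hlower, hdiag⟩ := g.2
  refine Subtype.ext (Units.ext ?_)
  ext i j
  fin_cases i <;> fin_cases j <;> first | exact hdiag _ | exact hlower (by decide) | rfl

theorem forall_ofEntries {p : U₄ → Prop} :
    (∀ g, p g) ↔ ∀ a b c d e f, p (ofEntries a b c d e f) :=
  ⟨fun h _ _ _ _ _ _ => h _, fun h g => eq_ofEntries g ▸ h _ _ _ _ _ _⟩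

theorem exists_ofEntries {p : U₄ → Prop} :
    (∃ g, p g) ↔ ∃ a b c d e f, p (ofEntries a b c d e f) :=
  ⟨fun ⟨g, hg⟩ => ⟨_, _, _, _, _, _, eq_ofEntries g ▸ hg⟩, fun ⟨_, _, _, _, _, _, h⟩ => ⟨_, h⟩⟩

theorem ofEntries_mul (a b c d e f a' b' c' d' e' f' : ZMod 2) :
    ofEntries a b c d e f * ofEntries a' b' c' d' e' f' =
      ofEntries (a + a') (b + b' + a * d') (c + c' + a * e' + b * f') (d + d')
        (e + e' + d * f') (f + f') :=
  Subtype.ext (Units.ext (unitri_mul ..))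

theorem ofEntries_zero : ofEntries 0 0 0 0 0 0 = 1 :=
  Subtype.ext (Units.ext unitri_zero)

theorem ofEntries_inv (a b c d e f : ZMod 2) :
    (ofEntries a b c d e f)⁻¹ =
      ofEntries a (b + a * d) (c + a * e + b * f + a * d * f) d (e + d * f) f := by
  rw [inv_eq_iff_mul_eq_one, ofEntries_mul, ← ofEntries_zero]
  congr 1 <;> grind

theorem ofEntries_inj {a b c d e f a' b' c' d' e' f' : ZMod 2} :
    ofEntries a b c d e f = ofEntries a' b' c' d' e' f' ↔
      a = a' ∧ b = b' ∧ c = c' ∧ d = d' ∧ e = e' ∧ f = f' := by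
  refine ⟨fun h => ?_, by rintro ⟨rfl, rfl, rfl, rfl, rfl, rfl⟩; rfl⟩
  exact ⟨congrArg (entry · 0 1) h, congrArg (entry · 0 2) h, congrArg (entry · 0 3) h,
    congrArg (entry · 1 2) h, congrArg (entry · 1 3) h, congrArg (entry · 2 3) h⟩

theorem sq_ofEntries (a b c d e f : ZMod 2) :
    ofEntries a b c d e f ^ 2 = ofEntries 0 (a * d) (a * e + b * f) 0 (d * f) 0 := by
  rw [sq, ofEntries_mul]
  congr 1 <;> grind

theorem sq_ofEntries_eq_one_iff {a b c d e f : ZMod 2} :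
    ofEntries a b c d e f ^ 2 = 1 ↔ a * d = 0 ∧ a * e + b * f = 0 ∧ d * f = 0 := by
  rw [sq_ofEntries, ← ofEntries_zero, ofEntries_inj]
  simp only [true_and, and_true]

def superdiag : U₄ →* Multiplicative (Fin 3 → ZMod 2) :=
  MonoidHom.mk' (fun g => ofAdd fun i => entry g i.castSucc i.succ) <| by
    simp only [forall_ofEntries, ofEntries_mul, ← ofAdd_add]
    intros
    congr 1
    funext i
    fin_cases i <;> rfl

theorem superdiag_ofEntries (a b c d e f : ZMod 2) :
    superdiag (ofEntries a b c d e f) = ofAdd ![a, d, f] := by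
  refine congrArg ofAdd (funext fun i => ?_)
  fin_cases i <;> rfl

theorem superdiag_surjective : Function.Surjective superdiag := fun x =>
  ⟨ofEntries (x.toAdd 0) 0 0 (x.toAdd 1) 0 (x.toAdd 2), by
    rw [superdiag_ofEntries]
    funext i
    fin_cases i <;> rfl⟩

theorem isPGroup_two : IsPGroup 2 U₄ :=
  forall_ofEntries.2 fun a b c d e f => ⟨2, by
    rw [show 2 ^ 2 = 2 * 2 from rfl, pow_mul, sq_ofEntries, sq_ofEntries, ← ofEntries_zero]
    simp⟩

instance : Group.IsNilpotent U₄ := isPGroup_two.isNilpotent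

theorem ofEntries_eq_commutator_mul_commutator (b c e : ZMod 2) :
    ofEntries 0 b c 0 e 0 =
      ⁅ofEntries 1 0 0 0 0 0, ofEntries 0 0 0 b c 0⁆ *
        ⁅ofEntries 0 0 0 e 0 0, ofEntries 0 0 0 0 0 1⁆ := by
  simp only [commutatorElement_def, ofEntries_inv, ofEntries_mul, ofEntries_inj]
  grind

theorem ker_superdiag_le_commutator : superdiag.ker ≤ commutator U₄ := by
  refine SetLike.le_def.2 (forall_ofEntries.2 fun a b c d e f h => ?_)
  rw [MonoidHom.mem_ker, superdiag_ofEntries] at h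
  obtain ⟨rfl, rfl, rfl⟩ : a = 0 ∧ d = 0 ∧ f = 0 := ⟨congrFun h 0, congrFun h 1, congrFun h 2⟩
  rw [ofEntries_eq_commutator_mul_commutator, commutator_def]
  exact mul_mem (Subgroup.commutator_mem_commutator trivial trivial)
    (Subgroup.commutator_mem_commutator trivial trivial)

theorem frattini_eq_ker_superdiag : frattini U₄ = superdiag.ker :=
  le_antisymm (frattini_le_ker_of_surjective superdiag_surjective)
    (ker_superdiag_le_commutator.trans commutator_le_frattini)

local notation "V" => ↥U₄ ⧸ frattini ↥U₄

noncomputable section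

def quotientFrattiniEquiv : V ≃* Multiplicative (Fin 3 → ZMod 2) :=
  (QuotientGroup.quotientMulEquivOfEq frattini_eq_ker_superdiag).trans
    (QuotientGroup.quotientKerEquivOfSurjective _ superdiag_surjective)

theorem quotientFrattiniEquiv_mk (g : U₄) : quotientFrattiniEquiv g = superdiag g := rfl

theorem mk_ofEntries (a b c d e f : ZMod 2) :
    (ofEntries a b c d e f : V) = quotientFrattiniEquiv.symm (ofAdd ![a, d, f]) := by
  rw [MulEquiv.eq_symm_apply, quotientFrattiniEquiv_mk, superdiag_ofEntries]

theorem image_quotientFrattiniEquiv_image_mk (S : Set U₄) :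
    quotientFrattiniEquiv '' ((↑) '' S : Set V) = superdiag '' S :=
  Set.image_image _ _ _

/-- Coordinates of the classes of `x₁₂`, `x₃₄` and `x₁₂x₃₄`. -/
def mixedCoords : Fin 3 → Fin 3 → ZMod 2 := ![![1, 0, 0], ![0, 0, 1], ![1, 0, 1]]

def mixedClass (i : Fin 3) : V := quotientFrattiniEquiv.symm (ofAdd (mixedCoords i))

def pureClass : V := quotientFrattiniEquiv.symm (ofAdd ![0, 1, 0])

theorem mixedClass_injective : Function.Injective mixedClass :=
  quotientFrattiniEquiv.symm.injective.comp (ofAdd.injective.comp (by decide))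

theorem pureClass_ne_one : pureClass ≠ 1 := by
  rw [pureClass, ne_eq, MulEquiv.symm_apply_eq, map_one]
  decide

theorem image_superdiag_setOf_sq_eq_one :
    superdiag '' {g | g ^ 2 = 1} = {x | x.toAdd 1 = 0} ∪ {ofAdd ![0, 1, 0]} := by
  ext x
  simp only [Set.mem_image, Set.mem_ofPred_eq, exists_ofEntries, superdiag_ofEntries,
    sq_ofEntries_eq_one_iff, exists_const, Set.mem_union, Set.mem_singleton_iff]
  revert x
  decide

theorem image_superdiag_compl_setOf_sq_eq_one :
    superdiag '' {g | g ^ 2 = 1}ᶜ = {1, ofAdd ![0, 1, 0]}ᶜ := by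
  ext x
  simp only [Set.mem_image, Set.mem_compl_iff, Set.mem_ofPred_eq, exists_ofEntries,
    superdiag_ofEntries, sq_ofEntries_eq_one_iff, exists_const, Set.mem_insert_iff,
    Set.mem_singleton_iff]
  revert x
  decide

theorem image_mk_inter_image_mk_compl :
    (↑) '' {g : U₄ | g ^ 2 = 1} ∩ (↑) '' {g : U₄ | g ^ 2 = 1}ᶜ = Set.range mixedClass := by
  refine Set.image_injective.2 quotientFrattiniEquiv.injective ?_
  rw [Set.image_inter quotientFrattiniEquiv.injective, image_quotientFrattiniEquiv_image_mk,
    image_quotientFrattiniEquiv_image_mk, image_superdiag_setOf_sq_eq_one,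
    image_superdiag_compl_setOf_sq_eq_one, ← Set.range_comp]
  ext x
  simp only [mixedClass, Function.comp_def, MulEquiv.apply_symm_apply, Set.mem_inter_iff,
    Set.mem_union, Set.mem_ofPred_eq, Set.mem_singleton_iff, Set.mem_compl_iff,
    Set.mem_insert_iff, Set.mem_range]
  revert x
  decide

theorem compl_image_mk_compl :
    ((↑) '' {g : U₄ | g ^ 2 = 1}ᶜ)ᶜ = ({1, pureClass} : Set V) := by
  refine Set.image_injective.2 quotientFrattiniEquiv.injective ?_
  rw [Set.image_compl_eq quotientFrattiniEquiv.bijective, image_quotientFrattiniEquiv_image_mk,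
    image_superdiag_compl_setOf_sq_eq_one, compl_compl, Set.image_insert_eq,
    Set.image_singleton, map_one, pureClass, MulEquiv.apply_symm_apply]

theorem closure_range_mixedClass_union_pureClass :
    Subgroup.closure (Set.range mixedClass ∪ {pureClass}) = ⊤ := by
  have hdecomp : ∀ x : Multiplicative (Fin 3 → ZMod 2),
      x = ofAdd (mixedCoords 0) ^ (x.toAdd 0).val * ofAdd ![0, 1, 0] ^ (x.toAdd 1).val *
        ofAdd (mixedCoords 1) ^ (x.toAdd 2).val := by
    decide
  have hmixed (i : Fin 3) :
      mixedClass i ∈ Subgroup.closure (Set.range mixedClass ∪ {pureClass}) :=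
    Subgroup.subset_closure (Or.inl ⟨i, rfl⟩)
  have hpure : pureClass ∈ Subgroup.closure (Set.range mixedClass ∪ {pureClass}) :=
    Subgroup.subset_closure (Or.inr rfl)
  refine eq_top_iff.2 fun v _ => ?_
  rw [← quotientFrattiniEquiv.symm_apply_apply v, hdecomp (quotientFrattiniEquiv v)]
  simp only [map_mul, map_pow]
  exact mul_mem (mul_mem (pow_mem (hmixed 0) _) (pow_mem hpure _)) (pow_mem (hmixed 1) _)

theorem mixedClass_eq_mk (i : Fin 3) :
    mixedClass i =
      (ofEntries (mixedCoords i 0) 0 0 (mixedCoords i 1) 0 (mixedCoords i 2) : V) := by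
  rw [mk_ofEntries, mixedClass]
  congr 2
  funext j
  fin_cases j <;> rfl

/-- `g ↦` the reflection of `g⁻¹` in the antidiagonal. -/
def flipFun (g : U₄) : U₄ :=
  let a := entry g 0 1; let b := entry g 0 2; let c := entry g 0 3
  let d := entry g 1 2; let e := entry g 1 3; let f := entry g 2 3
  ofEntries f (e + d * f) (c + a * e + b * f + a * d * f) d (b + a * d) a

theorem flipFun_ofEntries (a b c d e f : ZMod 2) :
    flipFun (ofEntries a b c d e f) =
      ofEntries f (e + d * f) (c + a * e + b * f + a * d * f) d (b + a * d) a :=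
  rfl

theorem flipFun_involutive : Function.Involutive flipFun :=
  forall_ofEntries.2 fun a b c d e f => by
    rw [flipFun_ofEntries, flipFun_ofEntries, ofEntries_inj]
    grind

theorem flipFun_mul (g h : U₄) : flipFun (g * h) = flipFun g * flipFun h := by
  revert g h
  simp only [forall_ofEntries, ofEntries_mul, flipFun_ofEntries, ofEntries_inj]
  grind

def flipAut : MulAut U₄ := MulEquiv.mk' flipFun_involutive.toPerm flipFun_mul

theorem flipAut_apply (g : U₄) : flipAut g = flipFun g := rfl

/-- Fixes `x₁₂`, `x₂₃` and sends `x₃₄` to `x₁₂x₃₄`. It has no analogue over larger fields of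
characteristic 2: multiplicativity uses `f² = f`. -/
def transvectionFun (g : U₄) : U₄ :=
  let a := entry g 0 1; let b := entry g 0 2; let c := entry g 0 3
  let d := entry g 1 2; let e := entry g 1 3; let f := entry g 2 3
  ofEntries (a + f) (b + e + d * f) (c + e + e * f) d e f

theorem transvectionFun_ofEntries (a b c d e f : ZMod 2) :
    transvectionFun (ofEntries a b c d e f) =
      ofEntries (a + f) (b + e + d * f) (c + e + e * f) d e f :=
  rfl

theorem transvectionFun_involutive : Function.Involutive transvectionFun :=
  forall_ofEntries.2 fun a b c d e f => by
    rw [transvectionFun_ofEntries, transvectionFun_ofEntries, ofEntries_inj]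
    grind

theorem transvectionFun_mul (g h : U₄) :
    transvectionFun (g * h) = transvectionFun g * transvectionFun h := by
  revert g h
  simp only [forall_ofEntries, ofEntries_mul, transvectionFun_ofEntries, ofEntries_inj]
  intro a b c d e f a' b' c' d' e' f'
  grind [ZMod.pow_card f']

def transvectionAut : MulAut U₄ :=
  MulEquiv.mk' transvectionFun_involutive.toPerm transvectionFun_mul

theorem transvectionAut_apply (g : U₄) : transvectionAut g = transvectionFun g := rfl

section Image

variable {ρ : MulAut U₄ →* MulAut V} (hρ : ∀ (φ : MulAut U₄) (g : U₄), ρ φ (g : V) = (φ g : V))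
include hρ

theorem image_range_mixedClass (φ : MulAut U₄) :
    ρ φ '' Set.range mixedClass = Set.range mixedClass := by
  rw [← image_mk_inter_image_mk_compl, Set.image_inter (ρ φ).injective,
    image_image_mk_of_image_eq (hρ φ) (φ.image_setOf_pow_eq_one 2),
    image_image_mk_compl_of_image_eq (hρ φ) (φ.image_setOf_pow_eq_one 2)]

theorem apply_pureClass (φ : MulAut U₄) : ρ φ pureClass = pureClass := by
  have himage : ρ φ '' ({1, pureClass} : Set V) = {1, pureClass} := by
    rw [← compl_image_mk_compl, Set.image_compl_eq (ρ φ).bijective,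
      image_image_mk_compl_of_image_eq (hρ φ) (φ.image_setOf_pow_eq_one 2)]
  have hmem : ρ φ pureClass ∈ ({1, pureClass} : Set V) :=
    himage ▸ Set.mem_image_of_mem _ (Set.mem_insert_of_mem _ rfl)
  rcases hmem with hone | hpure
  · exact absurd ((map_eq_one_iff _ (ρ φ).injective).1 hone) pureClass_ne_one
  · exact hpure

theorem flipAut_mixedClass (i : Fin 3) :
    ρ flipAut (mixedClass i) = mixedClass (Equiv.swap 0 1 i) := by
  rw [mixedClass_eq_mk, hρ, flipAut_apply, flipFun_ofEntries, mk_ofEntries, mixedClass]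
  congr 2
  revert i
  decide

theorem transvectionAut_mixedClass (i : Fin 3) :
    ρ transvectionAut (mixedClass i) = mixedClass (Equiv.swap 1 2 i) := by
  rw [mixedClass_eq_mk, hρ, transvectionAut_apply, transvectionFun_ofEntries, mk_ofEntries,
    mixedClass]
  congr 2
  revert i
  decide

def mixedClassPerm : ρ.range →* Equiv.Perm (Fin 3) :=
  rangePermHom mixedClass_injective (by rintro ⟨_, φ, rfl⟩; exact image_range_mixedClass hρ φ)

theorem mixedClass_mixedClassPerm (σ : ρ.range) (i : Fin 3) :
    mixedClass (mixedClassPerm hρ σ i) = (σ : MulAut V) (mixedClass i) :=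
  apply_rangePermHom _ _ σ i

theorem mixedClassPerm_eq_of_apply {σ : ρ.range} {τ : Equiv.Perm (Fin 3)}
    (h : ∀ i, (σ : MulAut V) (mixedClass i) = mixedClass (τ i)) : mixedClassPerm hρ σ = τ :=
  Equiv.ext fun i => mixedClass_injective ((mixedClass_mixedClassPerm hρ σ i).trans (h i))

theorem mixedClassPerm_injective : Function.Injective (mixedClassPerm hρ) := by
  refine (injective_iff_map_eq_one _).2 ?_
  rintro ⟨_, φ, rfl⟩ hσ
  have hfix : Set.EqOn (ρ φ).toMonoidHom (MonoidHom.id V)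
      (Set.range mixedClass ∪ {pureClass}) := by
    rintro _ (⟨i, rfl⟩ | rfl)
    · simpa [hσ] using (mixedClass_mixedClassPerm hρ ⟨ρ φ, φ, rfl⟩ i).symm
    · exact apply_pureClass hρ φ
  have hid := MonoidHom.eq_of_eqOn_dense closure_range_mixedClass_union_pureClass hfix
  exact Subtype.ext (MulEquiv.ext fun v => DFunLike.congr_fun hid v)

theorem mixedClassPerm_surjective : Function.Surjective (mixedClassPerm hρ) := by
  rw [← MonoidHom.mrange_eq_top, eq_top_iff, ← Equiv.Perm.mclosure_swap_castSucc_succ 2,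
    Submonoid.closure_le]
  rintro _ ⟨i, rfl⟩
  fin_cases i
  · exact ⟨⟨ρ flipAut, flipAut, rfl⟩, mixedClassPerm_eq_of_apply hρ (flipAut_mixedClass hρ)⟩
  · exact ⟨⟨ρ transvectionAut, transvectionAut, rfl⟩,
      mixedClassPerm_eq_of_apply hρ (transvectionAut_mixedClass hρ)⟩

end Image

end

end UnitriangularF2

/-- **Application 3.** Let `P = U₄(𝔽₂)` be the group of `4×4` upper triangular matrices
over `𝔽₂` with ones on the diagonal (as a subgroup of `GL₄(𝔽₂)`), and let
`Φ(P) = frattini P` be its Frattini subgroup, so `V = P/Φ(P)` is elementary abelian of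
rank `3`.  Then the image of the natural homomorphism `ρ : Aut(P) → Aut(V)` (with
`ρ(φ)(gΦ(P)) = φ(g)Φ(P)`) is isomorphic to the symmetric group `Σ₃`. -/
theorem unitriangular_aut_image_iso_S3
    (P : Subgroup (GL (Fin 4) (ZMod 2)))
    (hP : ∀ A : GL (Fin 4) (ZMod 2), A ∈ P ↔
      (∀ i j : Fin 4, j < i → (A : Matrix (Fin 4) (Fin 4) (ZMod 2)) i j = 0) ∧
      (∀ i : Fin 4, (A : Matrix (Fin 4) (Fin 4) (ZMod 2)) i i = 1))
    (ρ : MulAut ↥P →* MulAut (↥P ⧸ frattini ↥P))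
    (hρ : ∀ (φ : MulAut ↥P) (g : ↥P),
      ρ φ ((g : ↥P ⧸ frattini ↥P)) = ((φ g : ↥P) : ↥P ⧸ frattini ↥P)) :
    Nonempty (↥ρ.range ≃* Equiv.Perm (Fin 3)) := by
  obtain rfl : P = unitriangularGroup (Fin 4) (ZMod 2) := Subgroup.ext hP
  exact ⟨MulEquiv.ofBijective (UnitriangularF2.mixedClassPerm hρ)
    ⟨UnitriangularF2.mixedClassPerm_injective hρ, UnitriangularF2.mixedClassPerm_surjective hρ⟩⟩
end
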